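/- arXiv:1404.1731 — 6 statements merged into one kernel-verified Lean document; each statement's English description precedes it below -/
import Mathlib

section
/- Let d = d₁ + d₂ with d₁, d₂ ≥ 1, let α ∈ (0,2), δ > 0 and p ∈ (1,∞). Then there exists a constant C > 0 such that for every f ∈ C_c^∞(ℝ^d), the function ℒf belongs to L^p(ℝ^d) and ‖ℒf‖_{L^p(ℝ^d)} ≤ C‖f‖_{L^p(ℝ^d)}. -/
/-!
Write `σ(x) = P A(x)` with `P = diag(0, 1)` and `A(x) = diag(1, σ₀(x))`. By compactness of the
set of matrices with bounded entries, the operator norms of `A(x)` and `A(x)⁻¹` and the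
determinant of `A(x)⁻¹` are bounded uniformly in `x`. The cutoff kernel `(1 - χ(|z|)) |z|^{-s}`
is dominated by the tail kernel `k(z) = 1_{|z| ≥ δ/2} |z|^{-s}`, integrable since `s > d`, so
`|ℒf(x)| ≤ ∫ |f(x + σ(x) z)| k(z) dz + |f(x)| ‖k‖₁`. Substituting `w = A(x) z` bounds the first
term by `∫ |f(x + P w)| K(w) dw` for a tail kernel `K` that no longer depends on `x`, and
Hölder's inequality in `w`, Fubini and translation invariance give
`‖∫ |f(· + P w)| K(w) dw‖_p ≤ ‖K‖₁ ‖f‖_p`.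
-/

open MeasureTheory Set
open scoped ContDiff ENNReal NNReal

theorem Real.rpow_neg_le_mul_rpow_neg {r t a s : ℝ} (hr : 0 < r) (ht : 0 < t)
    (hta : t ≤ a * r) (hs : 0 ≤ s) : r ^ (-s) ≤ a ^ s * t ^ (-s) := by
  have ha : 0 < a := pos_of_mul_pos_left (ht.trans_le hta) hr.le
  rw [Real.rpow_neg hr.le, Real.rpow_neg ht.le, ← Real.inv_rpow hr.le, ← div_eq_mul_inv,
    ← Real.div_rpow ha.le ht.le]
  refine Real.rpow_le_rpow (inv_nonneg.2 hr.le) ?_ hs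
  rw [le_div_iff₀ ht, inv_mul_le_iff₀ hr]
  linarith

section TailKernel

variable {E : Type*} [NormedAddCommGroup E]

noncomputable def tailKernel (s c : ℝ) (z : E) : ℝ≥0∞ :=
  if c ≤ ‖z‖ then ENNReal.ofReal (‖z‖ ^ (-s)) else 0

theorem measurable_tailKernel [MeasurableSpace E] [OpensMeasurableSpace E] (s c : ℝ) :
    Measurable (tailKernel (E := E) s c) :=
  Measurable.ite (measurableSet_le measurable_const measurable_norm)
    (measurable_norm.pow_const _).ennreal_ofReal measurable_const

theorem tailKernel_le_of_norm_le {F : Type*} [NormedAddCommGroup F] {s c a b : ℝ}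
    (hs : 0 ≤ s) (hc : 0 < c) (hb : 0 < b) {z : E} {w : F} (hwz : ‖w‖ ≤ a * ‖z‖)
    (hzw : ‖z‖ ≤ b * ‖w‖) :
    tailKernel s c z ≤ ENNReal.ofReal (a ^ s) * tailKernel s (c / b) w := by
  by_cases hz : c ≤ ‖z‖
  · have hz0 : 0 < ‖z‖ := hc.trans_le hz
    have hw0 : 0 < ‖w‖ := pos_of_mul_pos_right (hz0.trans_le hzw) hb.le
    have hcw : c / b ≤ ‖w‖ := by rw [div_le_iff₀' hb]; exact hz.trans hzw
    rw [tailKernel, tailKernel, if_pos hz, if_pos hcw, ← ENNReal.ofReal_mul' (by positivity)]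
    exact ENNReal.ofReal_le_ofReal (Real.rpow_neg_le_mul_rpow_neg hz0 hw0 hwz hs)
  · simp [tailKernel, hz]

theorem lintegral_tailKernel_lt_top [NormedSpace ℝ E] [FiniteDimensional ℝ E]
    [MeasurableSpace E] [BorelSpace E] (μ : Measure E) [μ.IsAddHaarMeasure] {s c : ℝ}
    (hs : (Module.finrank ℝ E : ℝ) < s) (hc : 0 < c) :
    ∫⁻ z, tailKernel s c z ∂μ < ⊤ := by
  have hle : ∀ z : E,
      tailKernel s c z ≤ ENNReal.ofReal ((1 + c⁻¹) ^ s * (1 + ‖z‖) ^ (-s)) := fun z => by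
    by_cases hz : c ≤ ‖z‖
    · have hz0 : 0 < ‖z‖ := hc.trans_le hz
      have hcz : 1 ≤ c⁻¹ * ‖z‖ := by rwa [le_inv_mul_iff₀ hc, mul_one]
      rw [tailKernel, if_pos hz]
      exact ENNReal.ofReal_le_ofReal (Real.rpow_neg_le_mul_rpow_neg hz0 (by positivity)
        (by linarith) ((Nat.cast_nonneg _).trans hs.le))
    · simp [tailKernel, hz]
  calc ∫⁻ z, tailKernel s c z ∂μ
      ≤ ∫⁻ z, ENNReal.ofReal ((1 + c⁻¹) ^ s * (1 + ‖z‖) ^ (-s)) ∂μ := lintegral_mono hle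
    _ < ⊤ := ((integrable_one_add_norm hs).const_mul _).lintegral_lt_top

theorem enorm_one_sub_mul_rpow_le_tailKernel {χ : ℝ → ℝ} {s c : ℝ}
    (hχ : ∀ r, χ r ∈ Icc (0 : ℝ) 1) (hχ1 : ∀ r ∈ Icc (0 : ℝ) c, χ r = 1) (z : E) :
    ‖(1 - χ ‖z‖) * ‖z‖ ^ (-s)‖ₑ ≤ tailKernel s c z := by
  have h0 : 0 ≤ 1 - χ ‖z‖ := sub_nonneg.2 (hχ _).2
  by_cases hz : c ≤ ‖z‖
  · rw [tailKernel, if_pos hz, Real.enorm_eq_ofReal (by positivity)]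
    refine ENNReal.ofReal_le_ofReal (mul_le_of_le_one_left (by positivity) ?_)
    linarith [(hχ ‖z‖).1]
  · simp [hχ1 _ ⟨norm_nonneg z, (not_le.1 hz).le⟩]

end TailKernel

theorem ENNReal.rpow_lintegral_mul_le {α : Type*} [MeasurableSpace α] {ν : Measure α}
    {p q : ℝ} (hpq : p.HolderConjugate q) {F K : α → ℝ≥0∞} (hF : AEMeasurable F ν)
    (hK : AEMeasurable K ν) :
    (∫⁻ w, F w * K w ∂ν) ^ p ≤ (∫⁻ w, F w ^ p * K w ∂ν) * (∫⁻ w, K w ∂ν) ^ (p - 1) := by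
  have hp := hpq.pos
  have hsplit : ∀ w, F w * K w = (F w * K w ^ (1 / p)) * K w ^ (1 / q) := fun w => by
    rw [mul_assoc, ← ENNReal.rpow_add_of_nonneg _ _ (one_div_pos.2 hp).le
      (one_div_pos.2 hpq.symm.pos).le, one_div, one_div, hpq.inv_add_inv_eq_one,
      ENNReal.rpow_one]
  have hFp : ∀ w, (F w * K w ^ (1 / p)) ^ p = F w ^ p * K w := fun w => by
    rw [ENNReal.mul_rpow_of_nonneg _ _ hp.le, ← ENNReal.rpow_mul, one_div_mul_cancel hp.ne',
      ENNReal.rpow_one]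
  have hKq : ∀ w, (K w ^ (1 / q)) ^ q = K w := fun w => by
    rw [← ENNReal.rpow_mul, one_div_mul_cancel hpq.symm.pos.ne', ENNReal.rpow_one]
  have holder := ENNReal.lintegral_mul_le_Lp_mul_Lq ν hpq (hF.mul (hK.pow_const (1 / p)))
    (hK.pow_const (1 / q))
  simp only [Pi.mul_apply, ← hsplit, hFp, hKq] at holder
  have hexp : 1 / q * p = p - 1 := by
    field_simp [hpq.symm.pos.ne']
    linarith [hpq.sub_one_mul_conj]
  calc (∫⁻ w, F w * K w ∂ν) ^ p
      ≤ ((∫⁻ w, F w ^ p * K w ∂ν) ^ (1 / p) * (∫⁻ w, K w ∂ν) ^ (1 / q)) ^ p :=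
        ENNReal.rpow_le_rpow holder hp.le
    _ = (∫⁻ w, F w ^ p * K w ∂ν) * (∫⁻ w, K w ∂ν) ^ (p - 1) := by
      rw [ENNReal.mul_rpow_of_nonneg _ _ hp.le, ← ENNReal.rpow_mul, ← ENNReal.rpow_mul,
        one_div_mul_cancel hp.ne', ENNReal.rpow_one, hexp]

section Translates

variable {G W : Type*} [MeasurableSpace G] [AddGroup G] [MeasurableAdd₂ G] {μ : Measure G}
  [SFinite μ] [μ.IsAddRightInvariant] [MeasurableSpace W] {ν : Measure W} [SFinite ν]
  {g : G → ℝ≥0∞} {K : W → ℝ≥0∞} {T : W → G}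

theorem lintegral_rpow_lintegral_comp_add_mul_le {p q : ℝ} (hpq : p.HolderConjugate q)
    (hg : Measurable g) (hK : Measurable K) (hT : Measurable T) :
    ∫⁻ x, (∫⁻ w, g (x + T w) * K w ∂ν) ^ p ∂μ ≤ (∫⁻ x, g x ^ p ∂μ) * (∫⁻ w, K w ∂ν) ^ p := by
  have hgT : Measurable fun xw : G × W => g (xw.1 + T xw.2) :=
    hg.comp (measurable_fst.add (hT.comp measurable_snd))
  have hF : Measurable fun xw : G × W => g (xw.1 + T xw.2) ^ p * K xw.2 :=
    (hgT.pow_const p).mul (hK.comp measurable_snd)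
  calc ∫⁻ x, (∫⁻ w, g (x + T w) * K w ∂ν) ^ p ∂μ
      ≤ ∫⁻ x, (∫⁻ w, g (x + T w) ^ p * K w ∂ν) * (∫⁻ w, K w ∂ν) ^ (p - 1) ∂μ :=
        lintegral_mono fun x => ENNReal.rpow_lintegral_mul_le hpq
          (hgT.comp measurable_prodMk_left).aemeasurable hK.aemeasurable
    _ = (∫⁻ w, (∫⁻ x, g (x + T w) ^ p ∂μ) * K w ∂ν) * (∫⁻ w, K w ∂ν) ^ (p - 1) := by
      rw [lintegral_mul_const _ hF.lintegral_prod_right', lintegral_lintegral_swap hF.aemeasurable]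
      refine congrArg (· * _) (lintegral_congr fun w => ?_)
      dsimp only
      exact lintegral_mul_const _ ((hg.comp (measurable_add_const (T w))).pow_const p)
    _ = (∫⁻ x, g x ^ p ∂μ) * (∫⁻ w, K w ∂ν) ^ p := by
      simp_rw [lintegral_add_right_eq_self (fun x => g x ^ p)]
      rw [lintegral_const_mul _ hK, mul_assoc]
      congr 1
      conv_lhs => enter [1]; rw [← ENNReal.rpow_one (∫⁻ w, K w ∂ν)]
      rw [← ENNReal.rpow_add_of_nonneg _ _ zero_le_one (sub_nonneg.2 hpq.lt.le),
        add_sub_cancel]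

theorem eLpNorm_lintegral_comp_add_mul_le {p : ℝ≥0∞} (hp : 1 < p) (hp' : p ≠ ⊤)
    (hg : Measurable g) (hK : Measurable K) (hT : Measurable T) :
    eLpNorm (fun x => ∫⁻ w, g (x + T w) * K w ∂ν) p μ ≤ (∫⁻ w, K w ∂ν) * eLpNorm g p μ := by
  have hpq : p.toReal.HolderConjugate p.toReal.conjExponent :=
    .conjExponent (by simpa using (ENNReal.toReal_lt_toReal ENNReal.one_ne_top hp').2 hp)
  simp only [eLpNorm_eq_lintegral_rpow_enorm_toReal (zero_lt_one.trans hp).ne' hp',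
    enorm_eq_self]
  calc (∫⁻ x, (∫⁻ w, g (x + T w) * K w ∂ν) ^ p.toReal ∂μ) ^ (1 / p.toReal)
      ≤ ((∫⁻ x, g x ^ p.toReal ∂μ) * (∫⁻ w, K w ∂ν) ^ p.toReal) ^ (1 / p.toReal) :=
        ENNReal.rpow_le_rpow (lintegral_rpow_lintegral_comp_add_mul_le hpq hg hK hT)
          (by positivity)
    _ = (∫⁻ w, K w ∂ν) * (∫⁻ x, g x ^ p.toReal ∂μ) ^ (1 / p.toReal) := by
      rw [ENNReal.mul_rpow_of_nonneg _ _ (by positivity), ← ENNReal.rpow_mul,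
        mul_one_div_cancel hpq.pos.ne', ENNReal.rpow_one, mul_comm]

end Translates

namespace Matrix

theorem exists_le_of_continuous_of_abs_le {m n : Type*} [Fintype m] [Fintype n]
    {F : Matrix m n ℝ → ℝ} (hF : Continuous F) (B : m → n → ℝ) :
    ∃ C, ∀ M : Matrix m n ℝ, (∀ i j, |M i j| ≤ B i j) → F M ≤ C := by
  have hK : IsCompact (Set.pi univ fun i => Set.pi univ fun j => Icc (-B i j) (B i j) :
      Set (Matrix m n ℝ)) :=
    isCompact_univ_pi fun i => isCompact_univ_pi fun j => isCompact_Icc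
  obtain ⟨C, hC⟩ := (hK.image hF).bddAbove
  exact ⟨C, fun M hM => hC ⟨M, fun i _ j _ => abs_le.1 (hM i j), rfl⟩⟩

variable {ι : Type*} [Fintype ι] [DecidableEq ι]

theorem _root_.Continuous.toEuclideanLin_apply {X : Type*} [TopologicalSpace X]
    {A : X → Matrix ι ι ℝ} {v : X → EuclideanSpace ℝ ι} (hA : Continuous A)
    (hv : Continuous v) : Continuous fun x => toEuclideanLin (A x) (v x) :=
  (PiLp.continuous_toLp 2 _).comp (hA.matrix_mulVec ((PiLp.continuous_ofLp 2 _).comp hv))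

theorem norm_toEuclideanLin_apply_le (M : Matrix ι ι ℝ) (z : EuclideanSpace ℝ ι) :
    ‖toEuclideanLin M z‖ ≤ ‖toEuclideanCLM (𝕜 := ℝ) M‖ * ‖z‖ := by
  rw [← coe_toEuclideanCLM_eq_toEuclideanLin]
  exact (toEuclideanCLM (𝕜 := ℝ) M).le_opNorm z

theorem toEuclideanLin_mul_apply (A B : Matrix ι ι ℝ) (v : EuclideanSpace ℝ ι) :
    toEuclideanLin (A * B) v = toEuclideanLin A (toEuclideanLin B v) := by
  simp

def fromDiagBlocks {R : Type*} [Zero R] {d₁ d₂ : ℕ} (M₁ : Matrix (Fin d₁) (Fin d₁) R)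
    (M₂ : Matrix (Fin d₂) (Fin d₂) R) : Matrix (Fin (d₁ + d₂)) (Fin (d₁ + d₂)) R :=
  (fromBlocks M₁ 0 0 M₂).submatrix finSumFinEquiv.symm finSumFinEquiv.symm

variable {R : Type*} {d₁ d₂ : ℕ}

theorem fromDiagBlocks_mul [NonUnitalNonAssocSemiring R] (A₁ B₁ : Matrix (Fin d₁) (Fin d₁) R)
    (A₂ B₂ : Matrix (Fin d₂) (Fin d₂) R) :
    fromDiagBlocks A₁ A₂ * fromDiagBlocks B₁ B₂ = fromDiagBlocks (A₁ * B₁) (A₂ * B₂) := by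
  simp [fromDiagBlocks, submatrix_mul_equiv, fromBlocks_multiply]

theorem fromDiagBlocks_one [Zero R] [One R] :
    fromDiagBlocks (1 : Matrix (Fin d₁) (Fin d₁) R) (1 : Matrix (Fin d₂) (Fin d₂) R) = 1 := by
  simp [fromDiagBlocks, fromBlocks_one]

theorem continuous_fromDiagBlocks_right [Zero R] [TopologicalSpace R]
    (M₁ : Matrix (Fin d₁) (Fin d₁) R) :
    Continuous fun M₂ : Matrix (Fin d₂) (Fin d₂) R => fromDiagBlocks M₁ M₂ :=
  (continuous_const.matrix_fromBlocks continuous_const continuous_const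
    continuous_id).matrix_submatrix _ _

theorem exists_norm_toEuclideanLin_fromDiagBlocks_one_le (B : Fin d₂ → Fin d₂ → ℝ) :
    ∃ a > 0, ∀ M : Matrix (Fin d₂) (Fin d₂) ℝ, (∀ i j, |M i j| ≤ B i j) →
      ∀ z, ‖toEuclideanLin (fromDiagBlocks (1 : Matrix (Fin d₁) (Fin d₁) ℝ) M) z‖ ≤ a * ‖z‖ := by
  obtain ⟨a, ha⟩ := exists_le_of_continuous_of_abs_le (continuous_norm.comp
    ((LinearMap.continuous_of_finiteDimensional
      (toEuclideanCLM (n := Fin (d₁ + d₂)) (𝕜 := ℝ)).toAlgEquiv.toLinearMap).comp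
        (continuous_fromDiagBlocks_right 1))) B
  exact ⟨max a 1, by positivity, fun M hM z => (norm_toEuclideanLin_apply_le _ z).trans
    (mul_le_mul_of_nonneg_right ((ha M hM).trans (le_max_left a 1)) (norm_nonneg z))⟩

end Matrix

section ChangeOfVariables

variable {ι : Type*} [Fintype ι] [DecidableEq ι]

theorem lintegral_comp_toEuclideanLin {A A' : Matrix ι ι ℝ} (h : A' * A = 1)
    {g : EuclideanSpace ℝ ι → ℝ≥0∞} (hg : Measurable g) :
    ∫⁻ z, g (Matrix.toEuclideanLin A z) = ENNReal.ofReal |A'.det| * ∫⁻ w, g w := by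
  have hdet : A'.det * A.det = 1 := by rw [← Matrix.det_mul, h, Matrix.det_one]
  have hdetA : LinearMap.det (Matrix.toEuclideanLin A) = A.det := LinearMap.det_toLpLin 2 A
  have hmap := Measure.map_linearMap_addHaar_eq_smul_addHaar volume
    (f := Matrix.toEuclideanLin A) (by rw [hdetA]; exact right_ne_zero_of_mul_eq_one hdet)
  rw [← lintegral_map hg (LinearMap.continuous_of_finiteDimensional _).measurable, hmap,
    lintegral_smul_measure, hdetA, ← eq_inv_of_mul_eq_one_left hdet, smul_eq_mul]

theorem lintegral_comp_mul_tailKernel_le {A A' : Matrix ι ι ℝ} (h : A' * A = 1) {a b s c : ℝ}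
    (ha : ∀ z, ‖Matrix.toEuclideanLin A z‖ ≤ a * ‖z‖)
    (hb : ∀ w, ‖Matrix.toEuclideanLin A' w‖ ≤ b * ‖w‖) (hb0 : 0 < b) (hs : 0 ≤ s) (hc : 0 < c)
    {g : EuclideanSpace ℝ ι → ℝ≥0∞} (hg : Measurable g) :
    ∫⁻ z, g (Matrix.toEuclideanLin A z) * tailKernel s c z ≤
      ENNReal.ofReal (a ^ s * |A'.det|) * ∫⁻ w, g w * tailKernel s (c / b) w := by
  have hκ : ∀ z, tailKernel s c z ≤
      ENNReal.ofReal (a ^ s) * tailKernel s (c / b) (Matrix.toEuclideanLin A z) := fun z => by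
    refine tailKernel_le_of_norm_le hs hc hb0 (ha z) ?_
    simpa [← Matrix.toEuclideanLin_mul_apply, h] using hb (Matrix.toEuclideanLin A z)
  have hgκ : Measurable fun w => g w * tailKernel s (c / b) w :=
    hg.mul (measurable_tailKernel s _)
  calc ∫⁻ z, g (Matrix.toEuclideanLin A z) * tailKernel s c z
      ≤ ∫⁻ z, ENNReal.ofReal (a ^ s) * (g (Matrix.toEuclideanLin A z) *
          tailKernel s (c / b) (Matrix.toEuclideanLin A z)) :=
        lintegral_mono fun z => by grw [hκ z, mul_left_comm]
    _ = ENNReal.ofReal (a ^ s * |A'.det|) * ∫⁻ w, g w * tailKernel s (c / b) w := by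
      rw [lintegral_const_mul' _ _ ENNReal.ofReal_ne_top, lintegral_comp_toEuclideanLin h hgκ,
        ENNReal.ofReal_mul' (abs_nonneg _), mul_assoc]

theorem eLpNorm_lintegral_comp_add_mul_tailKernel_le
    {σ A A' : EuclideanSpace ℝ ι → Matrix ι ι ℝ} {P : Matrix ι ι ℝ}
    (hσ : ∀ x, σ x = P * A x) (hA : ∀ x, A' x * A x = 1) {a b D s c : ℝ}
    (ha : ∀ x z, ‖Matrix.toEuclideanLin (A x) z‖ ≤ a * ‖z‖)
    (hb : ∀ x w, ‖Matrix.toEuclideanLin (A' x) w‖ ≤ b * ‖w‖) (hD : ∀ x, |(A' x).det| ≤ D)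
    (ha0 : 0 ≤ a) (hb0 : 0 < b) (hs : 0 ≤ s) (hc : 0 < c) {p : ℝ≥0∞} (hp : 1 < p)
    (hp' : p ≠ ⊤) {g : EuclideanSpace ℝ ι → ℝ≥0∞} (hg : Measurable g) :
    eLpNorm (fun x => ∫⁻ z, g (x + Matrix.toEuclideanLin (σ x) z) * tailKernel s c z) p volume ≤
      ENNReal.ofReal (a ^ s * D) * (∫⁻ w : EuclideanSpace ℝ ι, tailKernel s (c / b) w) *
        eLpNorm g p volume := by
  set K : EuclideanSpace ℝ ι → ℝ≥0∞ :=
    fun w => ENNReal.ofReal (a ^ s * D) * tailKernel s (c / b) w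
  have hT : Measurable (Matrix.toEuclideanLin P) :=
    (LinearMap.continuous_of_finiteDimensional _).measurable
  have hpointwise : ∀ x, ∫⁻ z, g (x + Matrix.toEuclideanLin (σ x) z) * tailKernel s c z ≤
      ∫⁻ w, g (x + Matrix.toEuclideanLin P w) * K w := fun x => by
    simp only [hσ x, Matrix.toEuclideanLin_mul_apply]
    calc ∫⁻ z, g (x + Matrix.toEuclideanLin P (Matrix.toEuclideanLin (A x) z)) * tailKernel s c z
        ≤ ENNReal.ofReal (a ^ s * |(A' x).det|) *
            ∫⁻ w, g (x + Matrix.toEuclideanLin P w) * tailKernel s (c / b) w :=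
          lintegral_comp_mul_tailKernel_le (hA x) (ha x) (hb x) hb0 hs hc
            (hg.comp ((measurable_const_add x).comp hT))
      _ ≤ ENNReal.ofReal (a ^ s * D) *
            ∫⁻ w, g (x + Matrix.toEuclideanLin P w) * tailKernel s (c / b) w := by
          gcongr
          exact hD x
      _ = ∫⁻ w, g (x + Matrix.toEuclideanLin P w) * K w := by
          rw [← lintegral_const_mul' _ _ ENNReal.ofReal_ne_top]
          simp only [K, mul_left_comm]
  calc eLpNorm (fun x => ∫⁻ z, g (x + Matrix.toEuclideanLin (σ x) z) * tailKernel s c z) p volume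
      ≤ eLpNorm (fun x => ∫⁻ w, g (x + Matrix.toEuclideanLin P w) * K w) p volume :=
        eLpNorm_mono_enorm fun x => by simpa only [enorm_eq_self] using hpointwise x
    _ ≤ (∫⁻ w, K w) * eLpNorm g p volume :=
        eLpNorm_lintegral_comp_add_mul_le hp hp' hg
          ((measurable_tailKernel (E := EuclideanSpace ℝ ι) s _).const_mul _) hT
    _ = _ := by rw [lintegral_const_mul' _ _ ENNReal.ofReal_ne_top]

end ChangeOfVariables

theorem exists_eLpNorm_lintegral_comp_fromDiagBlocks_le {d₁ d₂ : ℕ}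
    {σ₀ σ₀inv : EuclideanSpace ℝ (Fin (d₁ + d₂)) → Matrix (Fin d₂) (Fin d₂) ℝ}
    (hinv : ∀ x, σ₀inv x * σ₀ x = 1) (B Binv : Fin d₂ → Fin d₂ → ℝ)
    (hB : ∀ x i j, |σ₀ x i j| ≤ B i j) (hBinv : ∀ x i j, |σ₀inv x i j| ≤ Binv i j) {s c : ℝ}
    (hs : ((d₁ + d₂ : ℕ) : ℝ) < s) (hc : 0 < c) {p : ℝ≥0∞} (hp : 1 < p) (hp' : p ≠ ⊤) :
    ∃ C : ℝ≥0, ∀ g : EuclideanSpace ℝ (Fin (d₁ + d₂)) → ℝ≥0∞, Measurable g →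
      eLpNorm (fun x => ∫⁻ z, g (x + Matrix.toEuclideanLin (Matrix.fromDiagBlocks 0 (σ₀ x)) z) *
        tailKernel s c z) p volume ≤ C * eLpNorm g p volume := by
  obtain ⟨a, ha0, ha⟩ := Matrix.exists_norm_toEuclideanLin_fromDiagBlocks_one_le (d₁ := d₁) B
  obtain ⟨b, hb0, hb⟩ := Matrix.exists_norm_toEuclideanLin_fromDiagBlocks_one_le (d₁ := d₁) Binv
  obtain ⟨D, hD⟩ := Matrix.exists_le_of_continuous_of_abs_le (continuous_abs.comp
    (Matrix.continuous_fromDiagBlocks_right (1 : Matrix (Fin d₁) (Fin d₁) ℝ)).matrix_det) Binv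
  have hfin : ENNReal.ofReal (a ^ s * D) *
      ∫⁻ w : EuclideanSpace ℝ (Fin (d₁ + d₂)), tailKernel s (c / b) w ≠ ⊤ :=
    ENNReal.mul_ne_top ENNReal.ofReal_ne_top
      (lintegral_tailKernel_lt_top volume (by simpa using hs) (by positivity)).ne
  refine ⟨_, fun g hg => (ENNReal.coe_toNNReal hfin).symm ▸
    eLpNorm_lintegral_comp_add_mul_tailKernel_le (P := Matrix.fromDiagBlocks 0 1)
      (A := fun x => Matrix.fromDiagBlocks 1 (σ₀ x))
      (A' := fun x => Matrix.fromDiagBlocks 1 (σ₀inv x))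
      (fun x => by rw [Matrix.fromDiagBlocks_mul, zero_mul, one_mul])
      (fun x => by rw [Matrix.fromDiagBlocks_mul, one_mul, hinv x, Matrix.fromDiagBlocks_one])
      (fun x => ha _ (hB x)) (fun x => hb _ (hBinv x)) (fun x => hD _ (hBinv x)) ha0.le hb0
      ((Nat.cast_nonneg _).trans hs.le) hc hp hp' hg⟩

theorem enorm_setIntegral_sub_mul_le {E : Type*} [MeasurableSpace E] {μ : Measure E}
    (S : Set E) (F : E → ℝ) (a : ℝ) {k : E → ℝ} {κ : E → ℝ≥0∞} (hκ : Measurable κ)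
    (hk : ∀ z, ‖k z‖ₑ ≤ κ z) :
    ‖∫ z in S, (F z - a) * k z ∂μ‖ₑ ≤ ∫⁻ z, ‖F z‖ₑ * κ z ∂μ + ‖a‖ₑ * ∫⁻ z, κ z ∂μ := by
  calc ‖∫ z in S, (F z - a) * k z ∂μ‖ₑ
      ≤ ∫⁻ z in S, ‖(F z - a) * k z‖ₑ ∂μ := enorm_integral_le_lintegral_enorm _
    _ ≤ ∫⁻ z, ‖(F z - a) * k z‖ₑ ∂μ := setLIntegral_le_lintegral _ _
    _ ≤ ∫⁻ z, ‖F z‖ₑ * κ z + ‖a‖ₑ * κ z ∂μ := lintegral_mono fun z => by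
      rw [enorm_mul, ← add_mul]
      exact mul_le_mul' enorm_sub_le (hk z)
    _ = ∫⁻ z, ‖F z‖ₑ * κ z ∂μ + ‖a‖ₑ * ∫⁻ z, κ z ∂μ := by
      rw [lintegral_add_right _ (hκ.const_mul _), lintegral_const_mul _ hκ]

theorem eLpNorm_le_add_mul_of_enorm_le {α ε F : Type*} [MeasurableSpace α] {μ : Measure α}
    [TopologicalSpace ε] [ESeminormedAddMonoid ε] [NormedAddCommGroup F] {p : ℝ≥0∞}
    {f : α → ε} {G : α → ℝ≥0∞} {g : α → F} {M : ℝ≥0∞} (hG : AEMeasurable G μ)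
    (hg : AEStronglyMeasurable g μ) (hp : 1 ≤ p) (h : ∀ x, ‖f x‖ₑ ≤ G x + ‖g x‖ₑ * M) :
    eLpNorm f p μ ≤ eLpNorm G p μ + M * eLpNorm g p μ := by
  calc eLpNorm f p μ ≤ eLpNorm (G + fun x => ‖g x‖ₑ * M) p μ :=
        eLpNorm_mono_enorm fun x => by simpa using h x
    _ ≤ eLpNorm G p μ + eLpNorm (fun x => ‖g x‖ₑ * M) p μ :=
        eLpNorm_add_le hG.aestronglyMeasurable (hg.enorm.mul_const M).aestronglyMeasurable hp
    _ ≤ eLpNorm G p μ + M * eLpNorm g p μ := by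
        gcongr
        exact eLpNorm_le_mul_eLpNorm_of_ae_le_mul'' p hg (ae_of_all _ fun x => by simp [mul_comm])

section SetIntegral

variable {ι : Type*} [Fintype ι] [DecidableEq ι] {σ : EuclideanSpace ℝ ι → Matrix ι ι ℝ}
  {f : EuclideanSpace ℝ ι → ℝ} {k : EuclideanSpace ℝ ι → ℝ}

theorem Continuous.aestronglyMeasurable_setIntegral_sub_mul (hσ : Continuous σ)
    (hf : Continuous f) (hk : Measurable k) (S : Set (EuclideanSpace ℝ ι))
    (μ : Measure (EuclideanSpace ℝ ι)) :
    AEStronglyMeasurable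
      (fun x => ∫ z in S, (f (x + Matrix.toEuclideanLin (σ x) z) - f x) * k z) μ :=
  (((hf.comp (continuous_fst.add ((hσ.comp continuous_fst).toEuclideanLin_apply
    continuous_snd))).sub (hf.comp continuous_fst)).measurable.mul
      (hk.comp measurable_snd)).stronglyMeasurable.integral_prod_right'.aestronglyMeasurable

theorem eLpNorm_setIntegral_sub_mul_le {p : ℝ≥0∞} (hp : 1 ≤ p) {C : ℝ≥0}
    {κ : EuclideanSpace ℝ ι → ℝ≥0∞} (hκ : Measurable κ)
    (hC : ∀ g : EuclideanSpace ℝ ι → ℝ≥0∞, Measurable g →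
      eLpNorm (fun x => ∫⁻ z, g (x + Matrix.toEuclideanLin (σ x) z) * κ z) p volume ≤
        C * eLpNorm g p volume)
    (hσ : Continuous σ) (hf : Continuous f) (hk : ∀ z, ‖k z‖ₑ ≤ κ z)
    (S : Set (EuclideanSpace ℝ ι)) :
    eLpNorm (fun x => ∫ z in S, (f (x + Matrix.toEuclideanLin (σ x) z) - f x) * k z) p volume ≤
      (C + ∫⁻ z, κ z) * eLpNorm f p volume := by
  have hG : Measurable fun x => ∫⁻ z, ‖f (x + Matrix.toEuclideanLin (σ x) z)‖ₑ * κ z :=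
    ((hf.comp (continuous_fst.add ((hσ.comp continuous_fst).toEuclideanLin_apply
      continuous_snd))).enorm.measurable.mul (hκ.comp measurable_snd)).lintegral_prod_right'
  refine (eLpNorm_le_add_mul_of_enorm_le hG.aemeasurable hf.aestronglyMeasurable hp
    fun x => enorm_setIntegral_sub_mul_le S _ (f x) hκ hk).trans ?_
  rw [add_mul]
  gcongr
  simpa only [eLpNorm_enorm] using hC _ hf.measurable.enorm

end SetIntegral

theorem stmt_0_general (d₁ d₂ : ℕ)
    (α : ℝ) (hα : α ∈ Ioo (0:ℝ) 2) (δ : ℝ) (hδ : 0 < δ)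
    (p : ℝ≥0∞) (hp1 : 1 < p) (hp2 : p < ⊤)
    (σ₀ σ₀inv : EuclideanSpace ℝ (Fin (d₁ + d₂)) → Matrix (Fin d₂) (Fin d₂) ℝ)
    (hσ₀smooth : ∀ i j, ContDiff ℝ ∞ (fun x => σ₀ x i j))
    (hσ₀bdd : ∀ (n : ℕ) (i j : Fin d₂), ∃ B, ∀ x,
      ‖iteratedFDeriv ℝ n (fun x => σ₀ x i j) x‖ ≤ B)
    (hinv : ∀ x, σ₀ x * σ₀inv x = 1)
    (hinvbdd : ∃ B, ∀ x i j, |σ₀inv x i j| ≤ B)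
    (σ : EuclideanSpace ℝ (Fin (d₁ + d₂)) → Matrix (Fin (d₁ + d₂)) (Fin (d₁ + d₂)) ℝ)
    (hσ : ∀ x, σ x = (Matrix.fromBlocks (0 : Matrix (Fin d₁) (Fin d₁) ℝ)
      (0 : Matrix (Fin d₁) (Fin d₂) ℝ) (0 : Matrix (Fin d₂) (Fin d₁) ℝ)
      (σ₀ x)).submatrix finSumFinEquiv.symm finSumFinEquiv.symm)
    (χ : ℝ → ℝ) (hχsmooth : ContDiff ℝ ∞ χ)
    (hχrange : ∀ r, χ r ∈ Icc (0:ℝ) 1)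
    (hχ1 : ∀ r ∈ Icc (0:ℝ) (δ / 2), χ r = 1)
    (L : (EuclideanSpace ℝ (Fin (d₁ + d₂)) → ℝ) →
      EuclideanSpace ℝ (Fin (d₁ + d₂)) → ℝ)
    (hL : ∀ f x, L f x = ∫ z in ({0}ᶜ : Set (EuclideanSpace ℝ (Fin (d₁ + d₂)))),
      (f (x + Matrix.toEuclideanLin (σ x) z) - f x) *
        ((1 - χ ‖z‖) * ‖z‖ ^ (-(((d₁ + d₂ : ℕ) : ℝ) + α)))) :
    ∃ C > (0:ℝ), ∀ f : EuclideanSpace ℝ (Fin (d₁ + d₂)) → ℝ,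
      ContDiff ℝ ∞ f → HasCompactSupport f →
      MemLp (L f) p volume ∧
      eLpNorm (L f) p volume ≤ ENNReal.ofReal C * eLpNorm f p volume := by
  obtain rfl : σ = fun x => Matrix.fromDiagBlocks 0 (σ₀ x) := funext hσ
  set s : ℝ := ((d₁ + d₂ : ℕ) : ℝ) + α
  have hs : ((d₁ + d₂ : ℕ) : ℝ) < s := lt_add_of_pos_right _ hα.1
  choose B hB using fun i j => hσ₀bdd 0 i j
  obtain ⟨Binv, hBinv⟩ := hinvbdd
  obtain ⟨C, hC⟩ := exists_eLpNorm_lintegral_comp_fromDiagBlocks_le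
    (fun x => mul_eq_one_comm.1 (hinv x)) B (fun _ _ => Binv)
    (fun x i j => by simpa using hB i j x) hBinv hs (half_pos hδ) hp1 hp2.ne
  set M := ∫⁻ z : EuclideanSpace ℝ (Fin (d₁ + d₂)), tailKernel s (δ / 2) z
  have hCM : (C : ℝ≥0∞) + M ≠ ⊤ := ENNReal.add_ne_top.2 ⟨ENNReal.coe_ne_top,
    (lintegral_tailKernel_lt_top volume (by simpa using hs) (half_pos hδ)).ne⟩
  have hσc : Continuous fun x => Matrix.fromDiagBlocks (0 : Matrix (Fin d₁) (Fin d₁) ℝ) (σ₀ x) :=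
    (Matrix.continuous_fromDiagBlocks_right 0).comp
      (continuous_matrix fun i j => (hσ₀smooth i j).continuous)
  refine ⟨(C + M).toReal + 1, by positivity, fun f hf hfc => ?_⟩
  rw [funext (hL f)]
  have hLf := eLpNorm_setIntegral_sub_mul_le hp1.le (measurable_tailKernel s (δ / 2)) hC hσc
    hf.continuous (enorm_one_sub_mul_rpow_le_tailKernel hχrange hχ1) {0}ᶜ
  have hk : Measurable fun z : EuclideanSpace ℝ (Fin (d₁ + d₂)) => (1 - χ ‖z‖) * ‖z‖ ^ (-s) :=
    (continuous_const.sub (hχsmooth.continuous.comp continuous_norm)).measurable.mul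
      (measurable_norm.pow_const _)
  refine ⟨⟨hσc.aestronglyMeasurable_setIntegral_sub_mul hf.continuous hk _ _,
    hLf.trans_lt (ENNReal.mul_lt_top hCM.lt_top
      (hf.continuous.memLp_of_hasCompactSupport hfc).eLpNorm_lt_top)⟩, hLf.trans ?_⟩
  gcongr
  rw [ENNReal.le_ofReal_iff_toReal_le hCM (by positivity)]
  linarith

/-- Let `d = d₁ + d₂`, `α ∈ (0,2)`, `δ > 0`, `p ∈ (1,∞)`. With `σ₀` smooth
with bounded derivatives of all orders and uniformly bounded inverse, `σ(x)` the block matrix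
`[[0,0],[0,σ₀(x)]]`, `χ` a smooth cutoff equal to `1` on `[0,δ/2]` and `0` on `[δ,∞)`, and
`ℒf(x) = ∫_{ℝ^d∖{0}} (f(x+σ(x)z) - f(x)) (1-χ(|z|)) |z|^{-(d+α)} dz`, there exists `C > 0`
such that for every `f ∈ C_c^∞(ℝ^d)`, `ℒf ∈ L^p` and `‖ℒf‖_{L^p} ≤ C ‖f‖_{L^p}`. -/
theorem stmt_0 (d₁ d₂ : ℕ) (hd₁ : 1 ≤ d₁) (hd₂ : 1 ≤ d₂)
    (α : ℝ) (hα : α ∈ Ioo (0:ℝ) 2) (δ : ℝ) (hδ : 0 < δ)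
    (p : ℝ≥0∞) (hp1 : 1 < p) (hp2 : p < ⊤)
    (σ₀ σ₀inv : EuclideanSpace ℝ (Fin (d₁ + d₂)) → Matrix (Fin d₂) (Fin d₂) ℝ)
    (hσ₀smooth : ∀ i j, ContDiff ℝ ∞ (fun x => σ₀ x i j))
    (hσ₀bdd : ∀ (n : ℕ) (i j : Fin d₂), ∃ B, ∀ x,
      ‖iteratedFDeriv ℝ n (fun x => σ₀ x i j) x‖ ≤ B)
    (hinv : ∀ x, σ₀ x * σ₀inv x = 1)
    (hinvbdd : ∃ B, ∀ x i j, |σ₀inv x i j| ≤ B)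
    (σ : EuclideanSpace ℝ (Fin (d₁ + d₂)) → Matrix (Fin (d₁ + d₂)) (Fin (d₁ + d₂)) ℝ)
    (hσ : ∀ x, σ x = (Matrix.fromBlocks (0 : Matrix (Fin d₁) (Fin d₁) ℝ)
      (0 : Matrix (Fin d₁) (Fin d₂) ℝ) (0 : Matrix (Fin d₂) (Fin d₁) ℝ)
      (σ₀ x)).submatrix finSumFinEquiv.symm finSumFinEquiv.symm)
    (χ : ℝ → ℝ) (hχsmooth : ContDiff ℝ ∞ χ)
    (hχrange : ∀ r, χ r ∈ Icc (0:ℝ) 1)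
    (hχ1 : ∀ r ∈ Icc (0:ℝ) (δ / 2), χ r = 1)
    (hχ0 : ∀ r, δ ≤ r → χ r = 0)
    (L : (EuclideanSpace ℝ (Fin (d₁ + d₂)) → ℝ) →
      EuclideanSpace ℝ (Fin (d₁ + d₂)) → ℝ)
    (hL : ∀ f x, L f x = ∫ z in ({0}ᶜ : Set (EuclideanSpace ℝ (Fin (d₁ + d₂)))),
      (f (x + Matrix.toEuclideanLin (σ x) z) - f x) *
        ((1 - χ ‖z‖) * ‖z‖ ^ (-(((d₁ + d₂ : ℕ) : ℝ) + α)))) :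
    ∃ C > (0:ℝ), ∀ f : EuclideanSpace ℝ (Fin (d₁ + d₂)) → ℝ,
      ContDiff ℝ ∞ f → HasCompactSupport f →
      MemLp (L f) p volume ∧
      eLpNorm (L f) p volume ≤ ENNReal.ofReal C * eLpNorm f p volume :=
  stmt_0_general d₁ d₂ α hα δ hδ p hp1 hp2 σ₀ σ₀inv hσ₀smooth hσ₀bdd hinv hinvbdd σ hσ χ hχsmooth
    hχrange hχ1 L hL
end

section
/- Let α ∈ (0,2) and let ν be a Borel measure on ℝ^d∖{0} with ∫_{|z|≤1}|z|² ν(dz) < ∞ and such that lim_{ε↓0} ε^{α−2} ∫_{|z|≤ε}|z|² ν(dz) = c₁ for some constant c₁ > 0. Then for every p ≥ 2 there exist constants 0 < c₀ ≤ C₀ such that c₀ ε^{p−α} ≤ ∫_{|z|≤ε}|z|^p ν(dz) ≤ C₀ ε^{p−α} for all ε ∈ (0,1). -/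
/-!
Write `F r = ∫_{|z|≤r} |z|² dν` and `G r = ∫_{|z|≤r} |z|^p dν`. On the ball of radius `r` one has
`|z|^p ≤ r^(p-2) |z|²`, so `G r ≤ r^(p-2) F r ≍ r^(p-α)`. On the shell `r/2 < |z| ≤ r` one has
`|z|^p ≥ (r/2)^(p-2) |z|²`, and the hypothesis `F r ~ c₁ r^(2-α)` forces the shell to carry
`F r - F (r/2) ~ c₁ (1 - 2^(α-2)) r^(2-α)`, whence `G r ≳ r^(p-α)`. These bounds hold near `0`;
monotonicity of `G` extends them to all of `(0,1)`.
-/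

open MeasureTheory Set Filter Topology

section RealBounds

lemma rpow_le_rpow_sub_mul_rpow {a r p q : ℝ} (hq : 0 < q) (hqp : q ≤ p) (ha : 0 ≤ a)
    (har : a ≤ r) : a ^ p ≤ r ^ (p - q) * a ^ q := by
  rcases ha.eq_or_lt with rfl | ha
  · rw [Real.zero_rpow (hq.trans_le hqp).ne', Real.zero_rpow hq.ne', mul_zero]
  · calc a ^ p = a ^ (p - q) * a ^ q := by rw [← Real.rpow_add ha, sub_add_cancel]
      _ ≤ r ^ (p - q) * a ^ q := by gcongr

lemma rpow_sub_mul_rpow_le_rpow {a s p q : ℝ} (hqp : q ≤ p) (hs : 0 < s) (hsa : s ≤ a) :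
    s ^ (p - q) * a ^ q ≤ a ^ p :=
  calc s ^ (p - q) * a ^ q ≤ a ^ (p - q) * a ^ q :=
        mul_le_mul_of_nonneg_right (Real.rpow_le_rpow hs.le hsa (sub_nonneg.mpr hqp))
          (Real.rpow_nonneg (hs.le.trans hsa) q)
    _ = a ^ p := by rw [← Real.rpow_add (hs.trans_le hsa), sub_add_cancel]

lemma rpow_neg_mul_le_iff {ε β x K : ℝ} (hε : 0 < ε) : ε ^ (-β) * x ≤ K ↔ x ≤ K * ε ^ β := by
  rw [Real.rpow_neg hε.le, inv_mul_le_iff₀' (Real.rpow_pos_of_pos hε β)]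

lemma le_rpow_neg_mul_iff {ε β x K : ℝ} (hε : 0 < ε) : K ≤ ε ^ (-β) * x ↔ K * ε ^ β ≤ x := by
  rw [Real.rpow_neg hε.le, le_inv_mul_iff₀' (Real.rpow_pos_of_pos hε β)]

lemma exists_forall_Ioc_of_eventually_nhdsGT {P : ℝ → Prop} (h : ∀ᶠ ε in 𝓝[>] 0, P ε) :
    ∃ δ ∈ Ioo (0 : ℝ) 1, ∀ ε ∈ Ioc 0 δ, P ε := by
  obtain ⟨δ, hδ, hsub⟩ :=
    mem_nhdsGT_iff_exists_Ioc_subset.mp (h.and (Ioo_mem_nhdsGT one_pos))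
  exact ⟨δ, ⟨hδ, (hsub ⟨hδ, le_rfl⟩).2.2⟩, fun ε hε => (hsub hε).1⟩

variable {f g : ℝ → ℝ} {β c K k : ℝ}

lemma exists_eventually_le_mul_rpow (hf : Tendsto (fun ε => ε ^ (-β) * f ε) (𝓝[>] 0) (𝓝 c)) :
    ∃ K, ∀ᶠ ε in 𝓝[>] 0, f ε ≤ K * ε ^ β :=
  ⟨c + 1, by
    filter_upwards [hf.eventually (gt_mem_nhds (lt_add_one c)), self_mem_nhdsWithin]
      with ε hlt hε
    exact (rpow_neg_mul_le_iff hε).mp hlt.le⟩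

lemma exists_eventually_mul_rpow_le_sub_half (hβ : 0 < β) (hc : 0 < c)
    (hf : Tendsto (fun ε => ε ^ (-β) * f ε) (𝓝[>] 0) (𝓝 c)) :
    ∃ k > 0, ∀ᶠ ε in 𝓝[>] 0, k * ε ^ β ≤ f ε - f (ε / 2) := by
  have hhalf : Tendsto (· / 2 : ℝ → ℝ) (𝓝[>] 0) (𝓝[>] 0) :=
    tendsto_nhdsWithin_iff.mpr
      ⟨((continuous_id.div_const 2).tendsto' 0 0 (zero_div 2)).mono_left nhdsWithin_le_nhds,
        eventually_nhdsWithin_of_forall fun ε hε => mem_Ioi.mpr (half_pos hε)⟩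
  have hshell : Tendsto (fun ε => ε ^ (-β) * (f ε - f (ε / 2))) (𝓝[>] 0)
      (𝓝 (c - 2 ^ (-β) * c)) := by
    -- `ε^(-β) = 2^(-β) (ε/2)^(-β)`, so the second term is `2^(-β)` times a rescaled copy of `hf`
    refine (hf.sub ((hf.comp hhalf).const_mul (2 ^ (-β)))).congr' ?_
    filter_upwards [self_mem_nhdsWithin] with ε hε
    simp only [Function.comp_apply]
    rw [Real.div_rpow hε.le zero_le_two]
    field_simp
  have hgap : 0 < c - 2 ^ (-β) * c := by
    have : (2 : ℝ) ^ (-β) < 1 := Real.rpow_lt_one_of_one_lt_of_neg one_lt_two (neg_neg_of_pos hβ)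
    nlinarith
  refine ⟨(c - 2 ^ (-β) * c) / 2, half_pos hgap, ?_⟩
  filter_upwards [hshell.eventually (lt_mem_nhds (half_lt_self hgap)), self_mem_nhdsWithin]
    with ε hlt hε
  exact (le_rpow_neg_mul_iff hε).mp hlt.le

lemma exists_forall_le_mul_rpow_of_eventually (hg : MonotoneOn g (Ioc 0 1)) (hβ : 0 ≤ β)
    (h : ∀ᶠ ε in 𝓝[>] 0, g ε ≤ K * ε ^ β) :
    ∃ C, ∀ ε ∈ Ioo (0 : ℝ) 1, g ε ≤ C * ε ^ β := by
  obtain ⟨δ, ⟨hδ0, hδ1⟩, hδ⟩ := exists_forall_Ioc_of_eventually_nhdsGT h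
  have hδβ : 0 < δ ^ β := Real.rpow_pos_of_pos hδ0 β
  refine ⟨max K (|g 1| / δ ^ β), fun ε ⟨hε0, hε1⟩ => ?_⟩
  rcases le_or_gt ε δ with hεδ | hδε
  · exact (hδ ε ⟨hε0, hεδ⟩).trans (by gcongr; exact le_max_left _ _)
  · calc g ε ≤ g 1 := hg ⟨hε0, hε1.le⟩ ⟨one_pos, le_rfl⟩ hε1.le
      _ ≤ |g 1| / δ ^ β * δ ^ β := by rw [div_mul_cancel₀ _ hδβ.ne']; exact le_abs_self _
      _ ≤ max K (|g 1| / δ ^ β) * ε ^ β := by gcongr; exact le_max_right _ _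

lemma exists_forall_mul_rpow_le_of_eventually (hg : MonotoneOn g (Ioc 0 1)) (hβ : 0 ≤ β)
    (hk : 0 < k) (h : ∀ᶠ ε in 𝓝[>] 0, k * ε ^ β ≤ g ε) :
    ∃ c > 0, ∀ ε ∈ Ioo (0 : ℝ) 1, c * ε ^ β ≤ g ε := by
  obtain ⟨δ, ⟨hδ0, hδ1⟩, hδ⟩ := exists_forall_Ioc_of_eventually_nhdsGT h
  refine ⟨k * δ ^ β, by positivity, fun ε ⟨hε0, hε1⟩ => ?_⟩
  rcases le_or_gt ε δ with hεδ | hδε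
  · calc k * δ ^ β * ε ^ β ≤ k * 1 * ε ^ β := by
          gcongr; exact Real.rpow_le_one hδ0.le hδ1.le hβ
      _ ≤ g ε := by rw [mul_one]; exact hδ ε ⟨hε0, hεδ⟩
  · calc k * δ ^ β * ε ^ β ≤ k * δ ^ β * 1 := by
          gcongr; exact Real.rpow_le_one hε0.le hε1.le hβ
      _ ≤ g δ := by rw [mul_one]; exact hδ δ ⟨hδ0, le_rfl⟩
      _ ≤ g ε := hg ⟨hδ0, hδ1.le⟩ ⟨hε0, hε1.le⟩ hδε.le

lemma exists_rpow_bounds_of_eventually (hg : MonotoneOn g (Ioc 0 1)) (hβ : 0 ≤ β)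
    (hk : 0 < k) (hlower : ∀ᶠ ε in 𝓝[>] 0, k * ε ^ β ≤ g ε)
    (hupper : ∀ᶠ ε in 𝓝[>] 0, g ε ≤ K * ε ^ β) :
    ∃ c C : ℝ, 0 < c ∧ c ≤ C ∧ ∀ ε ∈ Ioo (0 : ℝ) 1, c * ε ^ β ≤ g ε ∧ g ε ≤ C * ε ^ β := by
  obtain ⟨c, hc, hcg⟩ := exists_forall_mul_rpow_le_of_eventually hg hβ hk hlower
  obtain ⟨C, hgC⟩ := exists_forall_le_mul_rpow_of_eventually hg hβ hupper
  refine ⟨c, max c C, hc, le_max_left _ _, fun ε hε => ⟨hcg ε hε, (hgC ε hε).trans ?_⟩⟩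
  gcongr
  · exact (Real.rpow_pos_of_pos hε.1 β).le
  · exact le_max_right _ _

end RealBounds

section BallIntegrals

variable {E : Type*} [NormedAddCommGroup E] [MeasurableSpace E] [OpensMeasurableSpace E]
  {ν : Measure E} {p q r s : ℝ}

lemma measurableSet_norm_le (r : ℝ) : MeasurableSet {z : E | ‖z‖ ≤ r} :=
  measurableSet_le measurable_norm measurable_const

lemma integrableOn_norm_rpow_of_le (hq : 0 < q) (hqp : q ≤ p)
    (h : IntegrableOn (fun z : E => ‖z‖ ^ q) {z | ‖z‖ ≤ r} ν) :
    IntegrableOn (fun z : E => ‖z‖ ^ p) {z | ‖z‖ ≤ r} ν := by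
  refine (h.const_mul (r ^ (p - q))).mono
    (continuous_norm.rpow_const fun _ => Or.inr (by linarith)).aestronglyMeasurable ?_
  rw [ae_restrict_iff' (measurableSet_norm_le r)]
  filter_upwards with z hz
  rw [Real.norm_of_nonneg (Real.rpow_nonneg (norm_nonneg z) p)]
  exact (rpow_le_rpow_sub_mul_rpow hq hqp (norm_nonneg z) hz).trans (le_abs_self _)

lemma setIntegral_norm_rpow_le (hq : 0 < q) (hqp : q ≤ p)
    (h : IntegrableOn (fun z : E => ‖z‖ ^ q) {z | ‖z‖ ≤ r} ν) :
    ∫ z in {z | ‖z‖ ≤ r}, ‖z‖ ^ p ∂ν ≤ r ^ (p - q) * ∫ z in {z | ‖z‖ ≤ r}, ‖z‖ ^ q ∂ν := by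
  rw [← integral_const_mul]
  exact setIntegral_mono_on (integrableOn_norm_rpow_of_le hq hqp h) (h.const_mul _)
    (measurableSet_norm_le r) fun z hz => rpow_le_rpow_sub_mul_rpow hq hqp (norm_nonneg z) hz

lemma mul_sub_le_setIntegral_norm_rpow (hq : 0 < q) (hqp : q ≤ p) (hs : 0 < s) (hsr : s ≤ r)
    (h : IntegrableOn (fun z : E => ‖z‖ ^ q) {z | ‖z‖ ≤ r} ν) :
    s ^ (p - q) * (∫ z in {z | ‖z‖ ≤ r}, ‖z‖ ^ q ∂ν - ∫ z in {z | ‖z‖ ≤ s}, ‖z‖ ^ q ∂ν) ≤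
      ∫ z in {z | ‖z‖ ≤ r}, ‖z‖ ^ p ∂ν := by
  have hsub : {z : E | ‖z‖ ≤ s} ⊆ {z | ‖z‖ ≤ r} := fun z hz => le_trans hz hsr
  have hp := integrableOn_norm_rpow_of_le hq hqp h
  rw [← setIntegral_sdiff (measurableSet_norm_le s) h hsub, ← integral_const_mul]
  calc ∫ z in {z | ‖z‖ ≤ r} \ {z | ‖z‖ ≤ s}, s ^ (p - q) * ‖z‖ ^ q ∂ν
      ≤ ∫ z in {z | ‖z‖ ≤ r} \ {z | ‖z‖ ≤ s}, ‖z‖ ^ p ∂ν :=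
        setIntegral_mono_on ((h.mono_set sdiff_subset).const_mul _) (hp.mono_set sdiff_subset)
          ((measurableSet_norm_le r).diff (measurableSet_norm_le s))
          fun z hz => rpow_sub_mul_rpow_le_rpow hqp hs (not_le.mp hz.2).le
    _ ≤ ∫ z in {z | ‖z‖ ≤ r}, ‖z‖ ^ p ∂ν :=
        setIntegral_mono_set hp (Eventually.of_forall fun z => Real.rpow_nonneg (norm_nonneg z) p)
          sdiff_subset.eventuallyLE

lemma monotoneOn_setIntegral_norm_rpow (hq : 0 < q) (hqp : q ≤ p) {R : ℝ}
    (h : IntegrableOn (fun z : E => ‖z‖ ^ q) {z | ‖z‖ ≤ R} ν) :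
    MonotoneOn (fun r => ∫ z in {z | ‖z‖ ≤ r}, ‖z‖ ^ p ∂ν) (Iic R) := fun _ _ s hs hrs =>
  setIntegral_mono_set
    (integrableOn_norm_rpow_of_le hq hqp
      (h.mono_set fun z (hz : ‖z‖ ≤ s) => (hz.trans hs : ‖z‖ ≤ R)))
    (Eventually.of_forall fun z => Real.rpow_nonneg (norm_nonneg z) p)
    (Eventually.of_forall fun _ hz => le_trans hz hrs)

end BallIntegrals

theorem stmt_2_general {d : ℕ} (α c₁ : ℝ) (hα : α ∈ Ioo (0:ℝ) 2) (hc₁ : 0 < c₁)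
    (ν : Measure (EuclideanSpace ℝ (Fin d)))
    (hint : IntegrableOn (fun z => ‖z‖ ^ (2:ℝ)) {z | ‖z‖ ≤ 1} ν)
    (hlim : Tendsto (fun ε : ℝ => ε ^ (α - 2) * ∫ z in {z | ‖z‖ ≤ ε}, ‖z‖ ^ (2:ℝ) ∂ν)
      (nhdsWithin 0 (Ioi 0)) (nhds c₁)) :
    ∀ p : ℝ, 2 ≤ p → ∃ c₀ C₀ : ℝ, 0 < c₀ ∧ c₀ ≤ C₀ ∧ ∀ ε ∈ Ioo (0:ℝ) 1,
      c₀ * ε ^ (p - α) ≤ ∫ z in {z | ‖z‖ ≤ ε}, ‖z‖ ^ p ∂ν ∧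
      ∫ z in {z | ‖z‖ ≤ ε}, ‖z‖ ^ p ∂ν ≤ C₀ * ε ^ (p - α) := by
  intro p hp
  have hint' : ∀ r ∈ Ioo (0 : ℝ) 1,
      IntegrableOn (fun z : EuclideanSpace ℝ (Fin d) => ‖z‖ ^ (2:ℝ)) {z | ‖z‖ ≤ r} ν :=
    fun r hr => hint.mono_set fun z hz => le_trans hz hr.2.le
  have hrpow : ∀ r : ℝ, 0 < r → r ^ (p - 2) * r ^ (2 - α) = r ^ (p - α) := fun r hr => by
    rw [← Real.rpow_add hr]; ring_nf
  rw [← neg_sub 2 α] at hlim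
  obtain ⟨K, hK⟩ := exists_eventually_le_mul_rpow hlim
  obtain ⟨k, hk, hkF⟩ := exists_eventually_mul_rpow_le_sub_half (by linarith [hα.2]) hc₁ hlim
  refine exists_rpow_bounds_of_eventually (K := K)
    ((monotoneOn_setIntegral_norm_rpow two_pos hp hint).mono Ioc_subset_Iic_self)
    (by linarith [hα.2]) (by positivity : 0 < k * 2 ^ (2 - p)) ?_ ?_
  · filter_upwards [hkF, Ioo_mem_nhdsGT one_pos] with ε hε hε1
    calc k * 2 ^ (2 - p) * ε ^ (p - α) = (ε / 2) ^ (p - 2) * (k * ε ^ (2 - α)) := by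
          rw [Real.div_rpow hε1.1.le zero_le_two, ← hrpow ε hε1.1, ← neg_sub p 2,
            Real.rpow_neg zero_le_two]
          field_simp
      _ ≤ _ := by gcongr; exact (Real.rpow_pos_of_pos (half_pos hε1.1) _).le
      _ ≤ _ := mul_sub_le_setIntegral_norm_rpow two_pos hp (half_pos hε1.1)
          (half_le_self hε1.1.le) (hint' ε hε1)
  · filter_upwards [hK, Ioo_mem_nhdsGT one_pos] with ε hε hε1
    calc _ ≤ ε ^ (p - 2) * ∫ z in {z | ‖z‖ ≤ ε}, ‖z‖ ^ (2:ℝ) ∂ν :=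
          setIntegral_norm_rpow_le two_pos hp (hint' ε hε1)
      _ ≤ ε ^ (p - 2) * (K * ε ^ (2 - α)) := by
          gcongr; exact (Real.rpow_pos_of_pos hε1.1 _).le
      _ = K * ε ^ (p - α) := by rw [← hrpow ε hε1.1]; ring

/-- Let `α ∈ (0,2)` and let `ν` be a Borel measure on `ℝ^d ∖ {0}` with
`∫_{|z|≤1} |z|² ν(dz) < ∞` and `lim_{ε↓0} ε^(α-2) ∫_{|z|≤ε} |z|² ν(dz) = c₁ > 0`.
Then for every `p ≥ 2` there are constants `0 < c₀ ≤ C₀` with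
`c₀ ε^(p-α) ≤ ∫_{|z|≤ε} |z|^p ν(dz) ≤ C₀ ε^(p-α)` for all `ε ∈ (0,1)`. -/
theorem stmt_2 {d : ℕ} (α c₁ : ℝ) (hα : α ∈ Ioo (0:ℝ) 2) (hc₁ : 0 < c₁)
    (ν : Measure (EuclideanSpace ℝ (Fin d)))
    (hν0 : ν {0} = 0)
    (hint : IntegrableOn (fun z => ‖z‖ ^ (2:ℝ)) {z | ‖z‖ ≤ 1} ν)
    (hlim : Tendsto (fun ε : ℝ => ε ^ (α - 2) * ∫ z in {z | ‖z‖ ≤ ε}, ‖z‖ ^ (2:ℝ) ∂ν)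
      (nhdsWithin 0 (Ioi 0)) (nhds c₁)) :
    ∀ p : ℝ, 2 ≤ p → ∃ c₀ C₀ : ℝ, 0 < c₀ ∧ c₀ ≤ C₀ ∧ ∀ ε ∈ Ioo (0:ℝ) 1,
      c₀ * ε ^ (p - α) ≤ ∫ z in {z | ‖z‖ ≤ ε}, ‖z‖ ^ p ∂ν ∧
      ∫ z in {z | ‖z‖ ≤ ε}, ‖z‖ ^ p ∂ν ≤ C₀ * ε ^ (p - α) :=
  stmt_2_general α c₁ hα hc₁ ν hint hlim
end

section
/- Let (Ω, 𝓕, P) be a probability space and ξ : Ω → [0,∞) a random variable. Let t ∈ (0,1], θ > 0, c₁ ∈ (0,1), C ≥ 1 and p ≥ 1, and suppose that P(ξ ≤ ε) ≤ C e^{−c₁ t ε^{−θ}} + C ε^p for all ε ∈ (0,1). Then there exists a constant C' > 0, depending only on C and p, such that for all λ ≥ t: E[e^{−λξ}] ≤ e^{−t (λ/t)^{θ/(1+θ)}} + C e^{−c₁ t (λ/t)^{θ/(1+θ)}} + C' λ^{−p}. -/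
/-!
Writing `e^{-λx} = ∫_x^∞ λ e^{-λε} dε` and applying Tonelli gives
`E[e^{-λξ}] = ∫₀^∞ λ e^{-λε} P(ξ < ε) dε`.
Split the integral at `r = (λ/t)^{-1/(1+θ)} ≤ 1`. On `[r, ∞)` bound the probability by `1`,
which leaves `e^{-λr} = e^{-t (λ/t)^{θ/(1+θ)}}`. On `(0, r)` use the small-ball hypothesis:
since `ε^{-θ} ≥ r^{-θ} = (λ/t)^{θ/(1+θ)}` there, the exponential term is at most
`C e^{-c₁ t (λ/t)^{θ/(1+θ)}}` and integrates against the density `λ e^{-λε}` to at most that,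
while `∫₀^∞ λ e^{-λε} ε^p dε = Γ(p+1) λ^{-p}`, so `C' = C Γ(p+1)` works.
-/

open MeasureTheory Set Real
open scoped ENNReal

section ExponentialDensity

variable {l : ℝ}

theorem integrableOn_Ioi_mul_exp_neg_mul (hl : 0 < l) (a : ℝ) :
    IntegrableOn (fun x => l * exp (-(l * x))) (Ioi a) := by
  simpa only [IntegrableOn, neg_mul] using (exp_neg_integrableOn_Ioi a hl).const_mul l

theorem integral_Ioi_mul_exp_neg_mul (hl : 0 < l) (a : ℝ) :
    ∫ x in Ioi a, l * exp (-(l * x)) = exp (-(l * a)) := by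
  have hlim : Filter.Tendsto (fun x => -exp (-(l * x))) Filter.atTop (nhds 0) := by
    simpa using (tendsto_exp_neg_atTop_nhds_zero.comp
      (Filter.tendsto_id.const_mul_atTop hl)).neg
  rw [integral_Ioi_of_hasDerivAt_of_tendsto'
    (fun x _ => ProbabilityTheory.hasDerivAt_neg_exp_mul_exp)
    (integrableOn_Ioi_mul_exp_neg_mul hl a) hlim]
  ring

theorem lintegral_Ioi_ofReal_mul_exp_neg_mul (hl : 0 < l) (a : ℝ) :
    ∫⁻ x in Ioi a, ENNReal.ofReal (l * exp (-(l * x))) = ENNReal.ofReal (exp (-(l * a))) := by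
  rw [← ofReal_integral_eq_lintegral_ofReal, integral_Ioi_mul_exp_neg_mul hl]
  · exact integrableOn_Ioi_mul_exp_neg_mul hl a
  · exact Filter.Eventually.of_forall fun x => by positivity

theorem integrableOn_Ioi_mul_exp_neg_mul_mul_rpow (hl : 0 < l) {p : ℝ} (hp : -1 < p) :
    IntegrableOn (fun x => l * exp (-(l * x)) * x ^ p) (Ioi 0) := by
  refine IntegrableOn.congr_fun
    ((integrableOn_rpow_mul_exp_neg_mul_rpow hp one_pos hl).const_mul l) (fun x _ => ?_)
    measurableSet_Ioi
  simp only [rpow_one, neg_mul]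
  ring

theorem integral_Ioi_mul_exp_neg_mul_mul_rpow (hl : 0 < l) {p : ℝ} (hp : -1 < p) :
    ∫ x in Ioi 0, l * exp (-(l * x)) * x ^ p = Gamma (p + 1) * l ^ (-p) := by
  have hGamma := integral_rpow_mul_exp_neg_mul_Ioi (a := p + 1) (by linarith) hl
  rw [add_sub_cancel_right] at hGamma
  calc ∫ x in Ioi 0, l * exp (-(l * x)) * x ^ p
      = l * ∫ x in Ioi 0, x ^ p * exp (-(l * x)) := by
        rw [← integral_const_mul]
        congr 1 with x
        ring
    _ = Gamma (p + 1) * l ^ (-p) := by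
        rw [hGamma, one_div, inv_rpow hl.le, ← rpow_neg hl.le, show -p = -(p + 1) + 1 by ring,
          rpow_add_one hl.ne']
        ring

end ExponentialDensity

section LaplaceTransform

variable {Ω : Type*} [MeasurableSpace Ω] {ξ : Ω → ℝ} {l : ℝ}

theorem lintegral_exp_neg_mul_eq_lintegral_measure_lt (μ : Measure Ω) [SFinite μ]
    (hξ : Measurable ξ) (hξ_nonneg : ∀ ω, 0 ≤ ξ ω) (hl : 0 < l) :
    ∫⁻ ω, ENNReal.ofReal (exp (-(l * ξ ω))) ∂μ
      = ∫⁻ ε in Ioi 0, ENNReal.ofReal (l * exp (-(l * ε))) * μ {ω | ξ ω < ε} := by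
  set g : ℝ → ℝ≥0∞ := fun ε => ENNReal.ofReal (l * exp (-(l * ε)))
  have hg : Measurable g := by fun_prop
  have hinner : ∀ ω, ∫⁻ ε in Ioi 0, (Ioi (ξ ω)).indicator g ε
      = ENNReal.ofReal (exp (-(l * ξ ω))) := fun ω => by
    rw [lintegral_indicator measurableSet_Ioi, Measure.restrict_restrict measurableSet_Ioi,
      inter_eq_left.mpr (Ioi_subset_Ioi (hξ_nonneg ω)),
      lintegral_Ioi_ofReal_mul_exp_neg_mul hl]
  have hjoint : Measurable (Function.uncurry fun ω ε => (Ioi (ξ ω)).indicator g ε) :=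
    (hg.comp measurable_snd).indicator
      (measurableSet_lt (hξ.comp measurable_fst) measurable_snd)
  simp_rw [← hinner]
  rw [lintegral_lintegral_swap hjoint.aemeasurable]
  refine setLIntegral_congr_fun measurableSet_Ioi fun ε _ => ?_
  rw [← lintegral_indicator_const (measurableSet_lt hξ measurable_const)]
  rfl

theorem lintegral_exp_neg_mul_le_of_measure_le (P : Measure Ω) [IsProbabilityMeasure P]
    (hξ : Measurable ξ) (hξ_nonneg : ∀ ω, 0 ≤ ξ ω) (hl : 0 < l) {r : ℝ} (hr : 0 < r)
    {F : ℝ → ℝ≥0∞} (hF : ∀ ε ∈ Ioo 0 r, P {ω | ξ ω ≤ ε} ≤ F ε) :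
    ∫⁻ ω, ENNReal.ofReal (exp (-(l * ξ ω))) ∂P
      ≤ (∫⁻ ε in Ioo 0 r, ENNReal.ofReal (l * exp (-(l * ε))) * F ε)
        + ENNReal.ofReal (exp (-(l * r))) := by
  rw [lintegral_exp_neg_mul_eq_lintegral_measure_lt P hξ hξ_nonneg hl,
    ← Ioo_union_Ici_eq_Ioi hr, lintegral_union measurableSet_Ici
      ((Iio_disjoint_Ici le_rfl).mono_left Ioo_subset_Iio_self),
    ← lintegral_Ioi_ofReal_mul_exp_neg_mul hl r, setLIntegral_congr Ioi_ae_eq_Ici.symm]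
  refine add_le_add ?_ (lintegral_mono fun ε => mul_le_of_le_one_right' (prob_le_one (μ := P)))
  refine setLIntegral_mono' measurableSet_Ioo fun ε hε => ?_
  exact mul_le_mul_right ((measure_mono fun ω (hω : ξ ω < ε) => hω.le).trans (hF ε hε)) _

end LaplaceTransform

theorem lintegral_Ioo_ofReal_mul_exp_neg_mul_mul_le {l : ℝ} (hl : 0 < l) (r : ℝ)
    {A C p : ℝ} (hA : 0 ≤ A) (hC : 0 ≤ C) (hp : -1 < p) :
    ∫⁻ ε in Ioo 0 r, ENNReal.ofReal (l * exp (-(l * ε))) * ENNReal.ofReal (A + C * ε ^ p)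
      ≤ ENNReal.ofReal (A + C * (Gamma (p + 1) * l ^ (-p))) := by
  have hint := integrableOn_Ioi_mul_exp_neg_mul hl 0
  have hint_rpow := integrableOn_Ioi_mul_exp_neg_mul_mul_rpow hl hp
  have hintegral : ∫ ε in Ioi 0, (A * (l * exp (-(l * ε))) + C * (l * exp (-(l * ε)) * ε ^ p))
      = A + C * (Gamma (p + 1) * l ^ (-p)) := by
    rw [integral_add (hint.const_mul A) (hint_rpow.const_mul C), integral_const_mul A,
      integral_const_mul C, integral_Ioi_mul_exp_neg_mul hl,
      integral_Ioi_mul_exp_neg_mul_mul_rpow hl hp]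
    simp
  calc ∫⁻ ε in Ioo 0 r, ENNReal.ofReal (l * exp (-(l * ε))) * ENNReal.ofReal (A + C * ε ^ p)
      ≤ ∫⁻ ε in Ioi 0,
          ENNReal.ofReal (A * (l * exp (-(l * ε))) + C * (l * exp (-(l * ε)) * ε ^ p)) := by
        refine (lintegral_mono_set Ioo_subset_Ioi_self).trans_eq
          (setLIntegral_congr_fun measurableSet_Ioi fun ε hε => ?_)
        have : (0 : ℝ) < ε := hε
        rw [← ENNReal.ofReal_mul (by positivity)]
        ring_nf
    _ = ENNReal.ofReal (A + C * (Gamma (p + 1) * l ^ (-p))) := by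
        rw [← hintegral]
        refine (ofReal_integral_eq_lintegral_ofReal
          ((hint.const_mul A).add (hint_rpow.const_mul C)) ?_).symm
        filter_upwards [self_mem_ae_restrict measurableSet_Ioi] with ε (hε : (0 : ℝ) < ε)
        simp only [Pi.zero_apply, Pi.add_apply]
        positivity

theorem rpow_neg_inv_one_add_rpow_neg {a θ : ℝ} (ha : 0 ≤ a) (hθ : 1 + θ ≠ 0) :
    (a ^ (-(1 + θ)⁻¹)) ^ (-θ) = a ^ (θ / (1 + θ)) := by
  rw [← rpow_mul ha]
  congr 1
  field_simp

theorem mul_rpow_neg_inv_one_add {a θ : ℝ} (ha : 0 < a) (hθ : 0 < θ) :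
    a * a ^ (-(1 + θ)⁻¹) = a ^ (θ / (1 + θ)) := by
  rw [show θ / (1 + θ) = 1 + -(1 + θ)⁻¹ by field_simp; ring, rpow_add ha, rpow_one]

theorem measure_le_of_small_ball_estimate {Ω : Type*} [MeasurableSpace Ω]
    {P : Measure Ω} [IsFiniteMeasure P] {ξ : Ω → ℝ} {θ c C p r : ℝ} (hθ : 0 < θ)
    (hc : 0 ≤ c) (hC : 0 ≤ C) (hr : r ≤ 1)
    (htail : ∀ ε ∈ Ioo (0 : ℝ) 1,
      (P {ω | ξ ω ≤ ε}).toReal ≤ C * exp (-(c * ε ^ (-θ))) + C * ε ^ p) :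
    ∀ ε ∈ Ioo 0 r,
      P {ω | ξ ω ≤ ε} ≤ ENNReal.ofReal (C * exp (-(c * r ^ (-θ))) + C * ε ^ p) := by
  intro ε hε
  have hrε : r ^ (-θ) ≤ ε ^ (-θ) := rpow_le_rpow_of_nonpos hε.1 hε.2.le (by linarith)
  rw [← ENNReal.ofReal_toReal (measure_ne_top P _)]
  refine ENNReal.ofReal_le_ofReal ((htail ε ⟨hε.1, hε.2.trans_le hr⟩).trans ?_)
  gcongr

/-- If `ξ ≥ 0` is a random variable on a probability space with
`P(ξ ≤ ε) ≤ C e^(-c₁ t ε^(-θ)) + C ε^p` for all `ε ∈ (0,1)`, where `t ∈ (0,1]`, `θ > 0`,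
`c₁ ∈ (0,1)`, `C ≥ 1`, `p ≥ 1`, then there is `C' > 0`, depending only on `C` and `p`,
such that for all `λ ≥ t`:
`E[e^(-λξ)] ≤ e^(-t (λ/t)^(θ/(1+θ))) + C e^(-c₁ t (λ/t)^(θ/(1+θ))) + C' λ^(-p)`. -/
theorem stmt_4 {Ω : Type*} [MeasurableSpace Ω] (P : Measure Ω) [IsProbabilityMeasure P]
    (ξ : Ω → ℝ) (hξmeas : Measurable ξ) (hξpos : ∀ ω, 0 ≤ ξ ω)
    (t θ c₁ C p : ℝ) (ht : t ∈ Ioc (0:ℝ) 1) (hθ : 0 < θ) (hc₁ : c₁ ∈ Ioo (0:ℝ) 1)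
    (hC : 1 ≤ C) (hp : 1 ≤ p)
    (htail : ∀ ε ∈ Ioo (0:ℝ) 1,
      (P {ω | ξ ω ≤ ε}).toReal ≤ C * Real.exp (-(c₁ * t * ε ^ (-θ))) + C * ε ^ p) :
    ∃ C' > (0:ℝ), ∀ l : ℝ, t ≤ l →
      ∫ ω, Real.exp (-(l * ξ ω)) ∂P ≤
        Real.exp (-(t * (l / t) ^ (θ / (1 + θ)))) +
        C * Real.exp (-(c₁ * t * (l / t) ^ (θ / (1 + θ)))) + C' * l ^ (-p) := by
  obtain ⟨ht0, -⟩ := ht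
  obtain ⟨hc₁0, -⟩ := hc₁
  refine ⟨C * Gamma (p + 1), mul_pos (by linarith) (Gamma_pos_of_pos (by linarith)),
    fun l hl => ?_⟩
  have hl0 : 0 < l := ht0.trans_le hl
  have ha : 1 ≤ l / t := (one_le_div ht0).mpr hl
  set r := (l / t) ^ (-(1 + θ)⁻¹)
  have hr0 : 0 < r := by positivity
  have hr1 : r ≤ 1 := rpow_le_one_of_one_le_of_nonpos ha (by rw [neg_nonpos]; positivity)
  have hbound := (lintegral_exp_neg_mul_le_of_measure_le P hξmeas hξpos hl0 hr0
      (measure_le_of_small_ball_estimate hθ (by positivity) (by linarith) hr1 htail)).trans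
    (add_le_add_left (lintegral_Ioo_ofReal_mul_exp_neg_mul_mul_le hl0 r (by positivity)
      (by linarith) (by linarith)) _)
  rw [rpow_neg_inv_one_add_rpow_neg (by positivity) (by linarith),
    show l * r = t * (l / t * r) by field_simp, mul_rpow_neg_inv_one_add (by positivity) hθ]
    at hbound
  rw [integral_eq_lintegral_of_nonneg_ae (Filter.Eventually.of_forall fun ω => by positivity)
    (by fun_prop)]
  refine ENNReal.toReal_le_of_le_ofReal (by positivity) (hbound.trans_eq ?_)
  rw [← ENNReal.ofReal_add (by positivity) (by positivity)]
  ring_nf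
end

section
/- Let q ∈ (1,2), δ > 0, C₀ > 0, and let ν be a finite Borel measure on {z ∈ ℝ^d : |z| ≥ δ} with ∫ |z|^q ν(dz) < ∞. Let σ : ℝ^d × ℝ^d → ℝ^d be such that for each z with |z| ≥ δ, the map x ↦ σ(x,z) is twice continuously differentiable with ‖∇_x σ(·,z)‖_∞ ≤ C₀(1+|z|) and ‖∇²_x σ(·,z)‖_∞ ≤ C₀(1+|z|), and (x,z) ↦ σ(x,z) is measurable. Define ℒ₁f(x) := ∫_{|z|≥δ} (f(x + σ(x,z)) − f(x)) ν(dz). Then there is a constant C depending only on C₀, q and d such that for every bounded continuously differentiable f : ℝ^d → ℝ with bounded gradient and [∇f]_{q−1} < ∞, the function ℒ₁f is continuously differentiable and ‖ℒ₁f‖_∞ + ‖∇(ℒ₁f)‖_∞ + [∇(ℒ₁f)]_{q−1} ≤ C (‖f‖_∞ + ‖∇f‖_∞ + [∇f]_{q−1}) ∫_{|z|≥δ} (1 + |z|^q) ν(dz). -/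
/-
For a fixed jump `z` the integrand `g_z x = f (x + σ x z) - f x` is `C¹`, with derivative
`Df(x + σ(x,z)) ∘ (I + D_xσ(x,z)) - Df(x)`. Comparing this derivative at `x` and `y` term by term,
the Hölder seminorm of `Df`, the Lipschitz bounds on `σ(·,z)` and `D_xσ(·,z)`, and the interpolation
`min(1, |x - y|) ≤ |x - y|^(q-1)` give a `(q-1)`-Hölder bound of size `(1 + C₀(1 + |z|))^q`,
which is `O(1 + |z|^q)`. So `g_z`, its derivative and the Hölder quotient of its derivative are all
dominated, uniformly in `x`, by a multiple of the `ν`-integrable weight `1 + |z|^q`; one may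
differentiate under the integral, and the bounds integrate to the claimed ones.
-/

open MeasureTheory Set Filter Topology

section RealInequalities

theorem min_one_le_rpow {α s : ℝ} (hα0 : 0 ≤ α) (hα1 : α ≤ 1) (hs : 0 ≤ s) :
    min 1 s ≤ s ^ α := by
  rcases le_total s 1 with h | h
  · calc min 1 s ≤ s := min_le_right _ _
      _ = s ^ (1 : ℝ) := (Real.rpow_one s).symm
      _ ≤ s ^ α := Real.rpow_le_rpow_of_exponent_ge' hs h hα0 hα1
  · calc min 1 s ≤ 1 := min_le_left _ _
      _ = s ^ (0 : ℝ) := (Real.rpow_zero s).symm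
      _ ≤ s ^ α := Real.rpow_le_rpow_of_exponent_le h hα0

theorem le_one_add_rpow {q t : ℝ} (hq : 1 ≤ q) (ht : 0 ≤ t) : t ≤ 1 + t ^ q := by
  rcases le_total t 1 with h | h
  · linarith [Real.rpow_nonneg ht q]
  · linarith [Real.rpow_one t ▸ Real.rpow_le_rpow_of_exponent_le h hq]

theorem one_add_mul_one_add_rpow_le {q c t : ℝ} (hq1 : 1 ≤ q) (hq2 : q ≤ 2) (hc : 0 ≤ c)
    (ht : 0 ≤ t) : (1 + c * (1 + t)) ^ q ≤ (1 + 2 * c) ^ 2 * (1 + t ^ q) := by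
  have hpow : (1 + 2 * c) ^ q ≤ (1 + 2 * c) ^ 2 := by
    exact_mod_cast Real.rpow_le_rpow_of_exponent_le (by linarith) hq2
  have htq := Real.rpow_nonneg ht q
  rcases le_total t 1 with h | h
  · calc (1 + c * (1 + t)) ^ q ≤ (1 + 2 * c) ^ q :=
          Real.rpow_le_rpow (by positivity) (by nlinarith) (by linarith)
      _ ≤ (1 + 2 * c) ^ 2 * (1 + t ^ q) := by nlinarith
  · calc (1 + c * (1 + t)) ^ q ≤ ((1 + 2 * c) * t) ^ q :=
          Real.rpow_le_rpow (by positivity) (by nlinarith) (by linarith)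
      _ = (1 + 2 * c) ^ q * t ^ q := Real.mul_rpow (by linarith) ht
      _ ≤ (1 + 2 * c) ^ 2 * (1 + t ^ q) := by nlinarith

theorem jump_constants_le {C₀ q t M K H : ℝ} (hq1 : 1 ≤ q) (hq2 : q ≤ 2) (hC₀ : 0 ≤ C₀)
    (ht : 0 ≤ t) (hM : 0 ≤ M) (hK : 0 ≤ K) (hH : 0 ≤ H) :
    2 * M ≤ 2 * (1 + 2 * C₀) ^ 2 * (M + K + H) * (1 + t ^ q) ∧
      K * (2 + C₀ * (1 + t)) ≤ 2 * (1 + 2 * C₀) ^ 2 * (M + K + H) * (1 + t ^ q) ∧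
      H * (1 + C₀ * (1 + t)) ^ q + 2 * K * (C₀ * (1 + t)) + H ≤
        2 * (1 + 2 * C₀) ^ 2 * (M + K + H) * (1 + t ^ q) := by
  have hpow := one_add_mul_one_add_rpow_le hq1 hq2 hC₀ ht
  have htw : 1 + t ≤ 2 * (1 + t ^ q) := by
    linarith [le_one_add_rpow hq1 ht, Real.rpow_nonneg ht q]
  set A := (1 + 2 * C₀) ^ 2
  set w := 1 + t ^ q
  have hw : 1 ≤ w := by linarith [Real.rpow_nonneg ht q]
  have hA : 1 + 2 * C₀ ≤ A := by nlinarith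
  have hAw : 1 ≤ A * w := one_le_mul_of_one_le_of_one_le (by linarith) hw
  have hAw' : (1 + 2 * C₀) * w ≤ A * w := by gcongr
  have hC₀t : C₀ * (1 + t) ≤ 2 * C₀ * w := by nlinarith
  refine ⟨by nlinarith, ?_, ?_⟩
  · calc K * (2 + C₀ * (1 + t)) ≤ K * (2 * (A * w)) := by gcongr; linarith
      _ ≤ _ := by nlinarith
  · calc H * (1 + C₀ * (1 + t)) ^ q + 2 * K * (C₀ * (1 + t)) + H
        ≤ H * (A * w) + 2 * K * (A * w) + H * (A * w) := by
          gcongr ?_ + 2 * K * ?_ + ?_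
          exacts [by gcongr, by nlinarith, le_mul_of_one_le_right hH hAw]
      _ ≤ _ := by nlinarith

end RealInequalities

section HolderBounds

variable {E G : Type*} [NormedAddCommGroup E] [NormedAddCommGroup G]

theorem norm_sub_le_two_mul_rpow_of_lipschitz_of_bounded {g : E → G} {L α : ℝ}
    (hα0 : 0 ≤ α) (hα1 : α ≤ 1) (hlip : ∀ x y, ‖g x - g y‖ ≤ L * ‖x - y‖)
    (hbdd : ∀ x, ‖g x‖ ≤ L) (x y : E) : ‖g x - g y‖ ≤ 2 * L * ‖x - y‖ ^ α := by
  have hL : 0 ≤ L := (norm_nonneg _).trans (hbdd x)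
  have hmin := min_one_le_rpow hα0 hα1 (norm_nonneg (x - y))
  have hsub : ‖g x - g y‖ ≤ 2 * L := (norm_sub_le _ _).trans (by linarith [hbdd x, hbdd y])
  calc ‖g x - g y‖ ≤ 2 * L * min 1 ‖x - y‖ := by
        rcases min_cases 1 ‖x - y‖ with ⟨h, -⟩ | ⟨h, -⟩ <;> rw [h] <;>
          nlinarith [hlip x y, norm_nonneg (x - y)]
    _ ≤ 2 * L * ‖x - y‖ ^ α := by gcongr

theorem nonneg_of_norm_sub_le_mul_rpow {g : E → G} {H α : ℝ}
    (hH : ∀ x y, ‖g x - g y‖ ≤ H * ‖x - y‖ ^ α) {x y : E} (hxy : x ≠ y) : 0 ≤ H := by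
  have hpos : 0 < ‖x - y‖ ^ α := Real.rpow_pos_of_pos (norm_pos_iff.2 (sub_ne_zero.2 hxy)) α
  exact nonneg_of_mul_nonneg_left ((norm_nonneg _).trans (hH x y)) hpos

theorem continuous_of_norm_sub_le_mul_rpow {g : E → G} {H β : ℝ} (hβ : 0 < β)
    (hg : ∀ x y, ‖g x - g y‖ ≤ H * ‖x - y‖ ^ β) : Continuous g := by
  refine continuous_iff_continuousAt.2 fun x => ?_
  rw [ContinuousAt, ← tendsto_sub_nhds_zero_iff]
  refine squeeze_zero_norm (fun y => hg y x) ?_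
  have := ((Real.continuousAt_rpow_const 0 β (Or.inr hβ.le)).tendsto.comp
    (tendsto_norm_sub_self x)).const_mul H
  simpa [Real.zero_rpow hβ.ne'] using this

end HolderBounds

section JumpDerivative

variable {E F : Type*} [NormedAddCommGroup E] [NormedSpace ℝ E] [NormedAddCommGroup F]
  [NormedSpace ℝ F]

theorem norm_sub_le_of_norm_fderiv_le {s : E → F} {L : ℝ} (hs : Differentiable ℝ s)
    (hs' : ∀ x, ‖fderiv ℝ s x‖ ≤ L) (x y : E) : ‖s x - s y‖ ≤ L * ‖x - y‖ :=
  convex_univ.norm_image_sub_le_of_norm_fderiv_le (fun w _ => hs w) (fun w _ => hs' w)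
    (mem_univ y) (mem_univ x)

theorem norm_fderiv_sub_le_of_norm_iteratedFDeriv_two_le {s : E → F} {L : ℝ}
    (hs : ContDiff ℝ 2 s) (hs'' : ∀ x, ‖iteratedFDeriv ℝ 2 s x‖ ≤ L) (x y : E) :
    ‖fderiv ℝ s x - fderiv ℝ s y‖ ≤ L * ‖x - y‖ := by
  refine norm_sub_le_of_norm_fderiv_le
    ((hs.fderiv_right (m := 1) le_rfl).differentiable one_ne_zero) (fun w => ?_) x y
  rw [← norm_iteratedFDeriv_one, norm_iteratedFDeriv_fderiv]
  exact hs'' w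

noncomputable def jumpFDeriv (f : E → F) (s : E → E) (x : E) : E →L[ℝ] F :=
  (fderiv ℝ f (x + s x)).comp (ContinuousLinearMap.id ℝ E + fderiv ℝ s x) - fderiv ℝ f x

theorem hasFDerivAt_jump {f : E → F} {s : E → E} {x : E} (hf : Differentiable ℝ f)
    (hs : DifferentiableAt ℝ s x) :
    HasFDerivAt (fun x => f (x + s x) - f x) (jumpFDeriv f s x) x :=
  ((hf _).hasFDerivAt.comp x ((hasFDerivAt_id x).add hs.hasFDerivAt)).sub (hf x).hasFDerivAt

theorem norm_id_add_le {A : E →L[ℝ] E} {L : ℝ} (hA : ‖A‖ ≤ L) :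
    ‖ContinuousLinearMap.id ℝ E + A‖ ≤ 1 + L :=
  (norm_add_le _ _).trans (add_le_add ContinuousLinearMap.norm_id_le hA)

theorem norm_jumpFDeriv_le {f : E → F} {s : E → E} {K L : ℝ} (hK : ∀ x, ‖fderiv ℝ f x‖ ≤ K)
    (x : E) (hs : ‖fderiv ℝ s x‖ ≤ L) : ‖jumpFDeriv f s x‖ ≤ K * (2 + L) := by
  have hK0 : 0 ≤ K := (norm_nonneg _).trans (hK x)
  calc ‖jumpFDeriv f s x‖
      ≤ ‖fderiv ℝ f (x + s x)‖ * ‖ContinuousLinearMap.id ℝ E + fderiv ℝ s x‖ + ‖fderiv ℝ f x‖ :=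
        (norm_sub_le _ _).trans (add_le_add_left (ContinuousLinearMap.opNorm_comp_le _ _) _)
    _ ≤ K * (1 + L) + K := by gcongr; exacts [hK _, norm_id_add_le hs, hK x]
    _ = K * (2 + L) := by ring

theorem jumpFDeriv_sub_jumpFDeriv (f : E → F) (s : E → E) (x y : E) :
    jumpFDeriv f s x - jumpFDeriv f s y =
      (fderiv ℝ f (x + s x) - fderiv ℝ f (y + s y)).comp
          (ContinuousLinearMap.id ℝ E + fderiv ℝ s x)
        + (fderiv ℝ f (y + s y)).comp (fderiv ℝ s x - fderiv ℝ s y)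
        - (fderiv ℝ f x - fderiv ℝ f y) := by
  simp only [jumpFDeriv, ContinuousLinearMap.sub_comp, ContinuousLinearMap.comp_sub,
    ContinuousLinearMap.comp_add]
  abel

theorem norm_jumpFDeriv_sub_le {f : E → F} {s : E → E} {K H L α : ℝ} (hα0 : 0 ≤ α)
    (hα1 : α ≤ 1) (hK : ∀ x, ‖fderiv ℝ f x‖ ≤ K)
    (hH : ∀ x y, ‖fderiv ℝ f x - fderiv ℝ f y‖ ≤ H * ‖x - y‖ ^ α) (hH0 : 0 ≤ H)
    (hs : ∀ x y, ‖s x - s y‖ ≤ L * ‖x - y‖) (hs' : ∀ x, ‖fderiv ℝ s x‖ ≤ L)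
    (hs'' : ∀ x y, ‖fderiv ℝ s x - fderiv ℝ s y‖ ≤ L * ‖x - y‖) (x y : E) :
    ‖jumpFDeriv f s x - jumpFDeriv f s y‖ ≤
      (H * (1 + L) ^ (α + 1) + 2 * K * L + H) * ‖x - y‖ ^ α := by
  have hK0 : 0 ≤ K := (norm_nonneg _).trans (hK x)
  have hL1 : 0 < 1 + L := by linarith [(norm_nonneg _).trans (hs' x)]
  have hshift : ‖(x + s x) - (y + s y)‖ ≤ (1 + L) * ‖x - y‖ := by
    rw [add_sub_add_comm]
    linarith [norm_add_le (x - y) (s x - s y), hs x y]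
  have hfirst : ‖fderiv ℝ f (x + s x) - fderiv ℝ f (y + s y)‖ ≤
      H * (1 + L) ^ α * ‖x - y‖ ^ α := by
    calc _ ≤ H * ‖(x + s x) - (y + s y)‖ ^ α := hH _ _
      _ ≤ H * ((1 + L) * ‖x - y‖) ^ α := by gcongr
      _ = H * (1 + L) ^ α * ‖x - y‖ ^ α := by
        rw [Real.mul_rpow hL1.le (norm_nonneg _), mul_assoc]
  have hsecond := norm_sub_le_two_mul_rpow_of_lipschitz_of_bounded hα0 hα1 hs'' hs' x y
  rw [jumpFDeriv_sub_jumpFDeriv, Real.rpow_add_one hL1.ne']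
  calc _ ≤ ‖fderiv ℝ f (x + s x) - fderiv ℝ f (y + s y)‖ *
          ‖ContinuousLinearMap.id ℝ E + fderiv ℝ s x‖
        + ‖fderiv ℝ f (y + s y)‖ * ‖fderiv ℝ s x - fderiv ℝ s y‖
        + ‖fderiv ℝ f x - fderiv ℝ f y‖ :=
        (norm_sub_le _ _).trans (add_le_add_left ((norm_add_le _ _).trans
          (add_le_add (ContinuousLinearMap.opNorm_comp_le _ _)
            (ContinuousLinearMap.opNorm_comp_le _ _))) _)
    _ ≤ H * (1 + L) ^ α * ‖x - y‖ ^ α * (1 + L) + K * (2 * L * ‖x - y‖ ^ α)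
        + H * ‖x - y‖ ^ α := by
        gcongr
        exacts [norm_id_add_le (hs' x), hK _, hH x y]
    _ = _ := by ring

theorem jump_bounds_of_contDiff_two {f : E → F} {s : E → E} {M K H L α : ℝ} (hα0 : 0 ≤ α)
    (hα1 : α ≤ 1) (hM : ∀ x, ‖f x‖ ≤ M) (hK : ∀ x, ‖fderiv ℝ f x‖ ≤ K)
    (hH : ∀ x y, ‖fderiv ℝ f x - fderiv ℝ f y‖ ≤ H * ‖x - y‖ ^ α) (hH0 : 0 ≤ H)
    (hs : ContDiff ℝ 2 s) (hs' : ∀ x, ‖fderiv ℝ s x‖ ≤ L)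
    (hs'' : ∀ x, ‖iteratedFDeriv ℝ 2 s x‖ ≤ L) :
    (∀ x, ‖f (x + s x) - f x‖ ≤ 2 * M) ∧ (∀ x, ‖jumpFDeriv f s x‖ ≤ K * (2 + L)) ∧
      ∀ x y, ‖jumpFDeriv f s x - jumpFDeriv f s y‖ ≤
        (H * (1 + L) ^ (α + 1) + 2 * K * L + H) * ‖x - y‖ ^ α := by
  refine ⟨fun x => ?_, fun x => norm_jumpFDeriv_le hK x (hs' x),
    norm_jumpFDeriv_sub_le hα0 hα1 hK hH hH0
      (norm_sub_le_of_norm_fderiv_le (hs.differentiable two_ne_zero) hs') hs'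
      (norm_fderiv_sub_le_of_norm_iteratedFDeriv_two_le hs hs'')⟩
  linarith [norm_sub_le (f (x + s x)) (f x), hM (x + s x), hM x]

theorem jump_bounds_of_contDiff_two_weighted {f : E → F} {s : E → E} {C₀ q t M K H : ℝ}
    (hq1 : 1 ≤ q) (hq2 : q ≤ 2) (hC₀ : 0 ≤ C₀) (ht : 0 ≤ t) (hM : ∀ x, ‖f x‖ ≤ M)
    (hK : ∀ x, ‖fderiv ℝ f x‖ ≤ K)
    (hH : ∀ x y, ‖fderiv ℝ f x - fderiv ℝ f y‖ ≤ H * ‖x - y‖ ^ (q - 1)) (hH0 : 0 ≤ H)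
    (hs : ContDiff ℝ 2 s) (hs' : ∀ x, ‖fderiv ℝ s x‖ ≤ C₀ * (1 + t))
    (hs'' : ∀ x, ‖iteratedFDeriv ℝ 2 s x‖ ≤ C₀ * (1 + t)) :
    (∀ x, ‖f (x + s x) - f x‖ ≤ 2 * (1 + 2 * C₀) ^ 2 * (M + K + H) * (1 + t ^ q)) ∧
      (∀ x, ‖jumpFDeriv f s x‖ ≤ 2 * (1 + 2 * C₀) ^ 2 * (M + K + H) * (1 + t ^ q)) ∧
      ∀ x y, ‖jumpFDeriv f s x - jumpFDeriv f s y‖ ≤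
        2 * (1 + 2 * C₀) ^ 2 * (M + K + H) * (1 + t ^ q) * ‖x - y‖ ^ (q - 1) := by
  obtain ⟨hM', hK', hH'⟩ := jump_constants_le hq1 hq2 hC₀ ht
    ((norm_nonneg _).trans (hM 0)) ((norm_nonneg _).trans (hK 0)) hH0
  obtain ⟨h₀, h₁, h₂⟩ := jump_bounds_of_contDiff_two (sub_nonneg.2 hq1) (by linarith) hM
    hK hH hH0 hs hs' hs''
  rw [sub_add_cancel] at h₂
  exact ⟨fun x => (h₀ x).trans hM', fun x => (h₁ x).trans hK',
    fun x y => (h₂ x y).trans (by gcongr)⟩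

end JumpDerivative

section Measurability

variable {α : Type*} [MeasurableSpace α] {μ : Measure α}
  {E F : Type*} [NormedAddCommGroup E] [NormedSpace ℝ E] [FiniteDimensional ℝ E]
  [MeasurableSpace E] [NormedAddCommGroup F] [NormedSpace ℝ F] [FiniteDimensional ℝ F]

/-- In finite dimension a linear map is determined continuously by its values on a basis, and
each of these values is an a.e. limit of measurable difference quotients. -/
theorem aestronglyMeasurable_fderiv_of_measurable_uncurry [MeasurableSpace F] [BorelSpace F]
    {σ : E → α → F} (hσ : Measurable (Function.uncurry σ)) (x : E)
    (hdiff : ∀ᵐ z ∂μ, DifferentiableAt ℝ (σ · z) x) :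
    AEStronglyMeasurable (fun z => fderiv ℝ (σ · z) x) μ := by
  let b := Module.finBasis ℝ E
  let e : (E →L[ℝ] F) ≃L[ℝ] (Fin (Module.finrank ℝ E) → F) :=
    (LinearMap.toContinuousLinearMap.symm.trans (b.constr ℝ).symm).toContinuousLinearEquiv
  have happly : ∀ L : E →L[ℝ] F, e L = fun i => L (b i) := fun L => rfl
  suffices AEMeasurable (fun z => e (fderiv ℝ (σ · z) x)) μ by
    simpa [Function.comp_def] using
      (e.symm.continuous.measurable.comp_aemeasurable this).aestronglyMeasurable
  simp only [happly]
  refine aemeasurable_pi_lambda _ fun i => ?_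
  have hquot : ∀ n : ℕ, Measurable fun z =>
      ((n : ℝ) + 1) • (σ (x + ((n : ℝ) + 1)⁻¹ • b i) z - σ x z) :=
    fun n => (hσ.of_uncurry_left.sub hσ.of_uncurry_left).const_smul _
  refine aemeasurable_of_tendsto_metrizable_ae atTop (fun n => (hquot n).aemeasurable) ?_
  filter_upwards [hdiff] with z hz
  refine hz.hasFDerivAt.lim (b i) (c := fun n : ℕ => (n : ℝ) + 1) ?_
  exact tendsto_norm_atTop_atTop.comp
    (tendsto_atTop_add_const_right atTop 1 tendsto_natCast_atTop_atTop)

theorem aestronglyMeasurable_jumpFDeriv [BorelSpace E] {f : E → F} {σ : E → α → E}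
    (hσ : Measurable (Function.uncurry σ)) (x : E)
    (hσ' : AEStronglyMeasurable (fun z => fderiv ℝ (σ · z) x) μ) :
    AEStronglyMeasurable (fun z => jumpFDeriv f (σ · z) x) μ := by
  have hfσ : AEStronglyMeasurable (fun z => fderiv ℝ f (x + σ x z)) μ :=
    ((measurable_fderiv ℝ f).comp (hσ.of_uncurry_left.const_add x)).aestronglyMeasurable
  exact (isBoundedBilinearMap_comp.continuous.comp_aestronglyMeasurable
    (hfσ.prodMk (aestronglyMeasurable_const.add hσ'))).sub aestronglyMeasurable_const

end Measurability

section ParametricIntegral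

variable {α : Type*} [MeasurableSpace α] {μ : Measure α}
  {E F : Type*} [NormedAddCommGroup E] [NormedSpace ℝ E] [NormedAddCommGroup F] [NormedSpace ℝ F]

theorem contDiff_integral_of_holder_fderiv {G : E → α → F} {G' : E → α → E →L[ℝ] F}
    {w : α → ℝ} {A β : ℝ} (hβ : 0 < β) (hw : Integrable w μ)
    (hG : ∀ x, AEStronglyMeasurable (G x) μ) (hG' : ∀ x, AEStronglyMeasurable (G' x) μ)
    (hderiv : ∀ᵐ z ∂μ, ∀ x, HasFDerivAt (G · z) (G' x z) x)
    (hbound : ∀ᵐ z ∂μ, ∀ x, ‖G x z‖ ≤ A * w z)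
    (hbound' : ∀ᵐ z ∂μ, ∀ x, ‖G' x z‖ ≤ A * w z)
    (hholder : ∀ᵐ z ∂μ, ∀ x y, ‖G' x z - G' y z‖ ≤ A * w z * ‖x - y‖ ^ β) :
    ContDiff ℝ 1 (fun x => ∫ z, G x z ∂μ) ∧
      (∀ x, ‖∫ z, G x z ∂μ‖ ≤ A * ∫ z, w z ∂μ) ∧
      (∀ x, ‖fderiv ℝ (fun x => ∫ z, G x z ∂μ) x‖ ≤ A * ∫ z, w z ∂μ) ∧
      ∀ x y, ‖fderiv ℝ (fun x => ∫ z, G x z ∂μ) x - fderiv ℝ (fun x => ∫ z, G x z ∂μ) y‖ ≤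
        (A * ∫ z, w z ∂μ) * ‖x - y‖ ^ β := by
  have hAw : Integrable (fun z => A * w z) μ := hw.const_mul A
  have hint : ∀ x, Integrable (G x) μ := fun x =>
    hAw.mono' (hG x) (hbound.mono fun z h => h x)
  have hint' : ∀ x, Integrable (G' x) μ := fun x =>
    hAw.mono' (hG' x) (hbound'.mono fun z h => h x)
  have hhas : ∀ x, HasFDerivAt (fun x => ∫ z, G x z ∂μ) (∫ z, G' x z ∂μ) x := fun x =>
    hasFDerivAt_integral_of_dominated_of_fderiv_le univ_mem (Eventually.of_forall hG)
      (hint x) (hG' x) (hbound'.mono fun z h y _ => h y) hAw (hderiv.mono fun z h y _ => h y)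
  have hfderiv : fderiv ℝ (fun x => ∫ z, G x z ∂μ) = fun x => ∫ z, G' x z ∂μ :=
    funext fun x => (hhas x).fderiv
  have hholder_int : ∀ x y, ‖∫ z, G' x z ∂μ - ∫ z, G' y z ∂μ‖ ≤
      (A * ∫ z, w z ∂μ) * ‖x - y‖ ^ β := by
    intro x y
    rw [← integral_sub (hint' x) (hint' y), ← integral_const_mul, ← integral_mul_const]
    exact norm_integral_le_of_norm_le (hAw.mul_const _) (hholder.mono fun z h => h x y)
  refine ⟨?_, fun x => ?_, fun x => ?_, fun x y => ?_⟩
  · refine contDiff_one_iff_fderiv.2 ⟨fun x => (hhas x).differentiableAt, ?_⟩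
    rw [hfderiv]
    exact continuous_of_norm_sub_le_mul_rpow hβ hholder_int
  · rw [← integral_const_mul]
    exact norm_integral_le_of_norm_le hAw (hbound.mono fun z h => h x)
  · rw [hfderiv, ← integral_const_mul]
    exact norm_integral_le_of_norm_le hAw (hbound'.mono fun z h => h x)
  · rw [hfderiv]
    exact hholder_int x y

end ParametricIntegral

/-- Let `q ∈ (1,2)`, `δ > 0`, `ν` a finite measure on `{|z| ≥ δ}` with
`∫|z|^q ν(dz) < ∞`, and `σ(·,z)` be `C²` in `x` with first and second derivatives bounded by
`C₀(1+|z|)`. Then there is `C = C(C₀,q,d)` such that for every bounded `C¹` function `f` with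
bounded gradient and finite `[∇f]_{q-1}`, the function `ℒ₁f(x) = ∫(f(x+σ(x,z))-f(x)) ν(dz)`
is `C¹` and `‖ℒ₁f‖_∞ + ‖∇ℒ₁f‖_∞ + [∇ℒ₁f]_{q-1} ≤ C (‖f‖_∞+‖∇f‖_∞+[∇f]_{q-1}) ∫(1+|z|^q) ν(dz)`. -/
theorem stmt_7 {d : ℕ} (q δ C₀ : ℝ) (hq : q ∈ Ioo (1:ℝ) 2) (hδ : 0 < δ) (hC₀ : 0 < C₀)
    (ν : Measure (EuclideanSpace ℝ (Fin d))) [IsFiniteMeasure ν]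
    (hsupp : ν {z | ‖z‖ < δ} = 0)
    (hmom : Integrable (fun z => ‖z‖ ^ q) ν)
    (σ : EuclideanSpace ℝ (Fin d) → EuclideanSpace ℝ (Fin d) → EuclideanSpace ℝ (Fin d))
    (hσmeas : Measurable (Function.uncurry σ))
    (hσdiff : ∀ z, δ ≤ ‖z‖ → ContDiff ℝ 2 (fun x => σ x z))
    (hσ1 : ∀ z, δ ≤ ‖z‖ → ∀ x, ‖fderiv ℝ (fun y => σ y z) x‖ ≤ C₀ * (1 + ‖z‖))
    (hσ2 : ∀ z, δ ≤ ‖z‖ → ∀ x,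
      ‖iteratedFDeriv ℝ 2 (fun y => σ y z) x‖ ≤ C₀ * (1 + ‖z‖)) :
    ∃ C > (0:ℝ), ∀ (f : EuclideanSpace ℝ (Fin d) → ℝ) (Mf Kf Hf : ℝ),
      ContDiff ℝ 1 f → (∀ x, |f x| ≤ Mf) → (∀ x, ‖fderiv ℝ f x‖ ≤ Kf) →
      (∀ x y, ‖fderiv ℝ f x - fderiv ℝ f y‖ ≤ Hf * ‖x - y‖ ^ (q - 1)) →
      ContDiff ℝ 1 (fun x => ∫ z, (f (x + σ x z) - f x) ∂ν) ∧
      (∀ x, |∫ z, (f (x + σ x z) - f x) ∂ν| ≤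
        C * (Mf + Kf + Hf) * ∫ z, (1 + ‖z‖ ^ q) ∂ν) ∧
      (∀ x, ‖fderiv ℝ (fun x => ∫ z, (f (x + σ x z) - f x) ∂ν) x‖ ≤
        C * (Mf + Kf + Hf) * ∫ z, (1 + ‖z‖ ^ q) ∂ν) ∧
      (∀ x y, ‖fderiv ℝ (fun x => ∫ z, (f (x + σ x z) - f x) ∂ν) x -
          fderiv ℝ (fun x => ∫ z, (f (x + σ x z) - f x) ∂ν) y‖ ≤
        (C * (Mf + Kf + Hf) * ∫ z, (1 + ‖z‖ ^ q) ∂ν) * ‖x - y‖ ^ (q - 1)) := by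
  obtain ⟨hq1, hq2⟩ := hq
  refine ⟨2 * (1 + 2 * C₀) ^ 2, by positivity, fun f Mf Kf Hf hf hMf hKf hHf => ?_⟩
  have hν : ∀ᵐ z ∂ν, δ ≤ ‖z‖ := by simpa [ae_iff] using hsupp
  have hbounds := hν.mono fun z hz => jump_bounds_of_contDiff_two_weighted hq1.le hq2.le hC₀.le
    (norm_nonneg z) (fun x => (Real.norm_eq_abs _).trans_le (hMf x)) hKf hHf
    (nonneg_of_norm_sub_le_mul_rpow hHf (norm_pos_iff.1 (hδ.trans_le hz)))
    (hσdiff z hz) (hσ1 z hz) (hσ2 z hz)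
  have hσ' : ∀ x, AEStronglyMeasurable (fun z => fderiv ℝ (σ · z) x) ν := fun x =>
    aestronglyMeasurable_fderiv_of_measurable_uncurry hσmeas x
      (hν.mono fun z hz => ((hσdiff z hz).differentiable two_ne_zero).differentiableAt)
  simpa only [Real.norm_eq_abs] using contDiff_integral_of_holder_fderiv
    (G := fun x z => f (x + σ x z) - f x) (w := fun z => 1 + ‖z‖ ^ q) (sub_pos.2 hq1)
    ((integrable_const 1).add hmom)
    (fun x => ((hf.continuous.measurable.comp (hσmeas.of_uncurry_left.const_add x)).sub
      measurable_const).aestronglyMeasurable)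
    (fun x => aestronglyMeasurable_jumpFDeriv hσmeas x (hσ' x))
    (hν.mono fun z hz x => hasFDerivAt_jump (hf.differentiable one_ne_zero)
      ((hσdiff z hz).differentiable two_ne_zero x))
    (hbounds.mono fun _ h => h.1) (hbounds.mono fun _ h => h.2.1) (hbounds.mono fun _ h => h.2.2)
end

section
/- Let C, K > 0 and C₁ ∈ (0, 1/2]. Let σ : ℝ^d × ℝ^d → ℝ^d be such that for each z, x ↦ σ(x,z) is continuously differentiable with |σ(x,z)| ≤ C min(1,|z|) and ‖∇_x σ(x,z)‖ ≤ C₁ min(1,|z|) for all x (so that I + ∇_x σ(x,z) is invertible with ‖(I + ∇_x σ(x,z))^{−1}‖ ≤ 2). Let V : ℝ^d → ℝ^{d×d} be twice continuously differentiable with ‖V‖_∞, ‖∇V‖_∞, ‖∇²V‖_∞ ≤ K. Define Q(x,z) := (I + ∇_x σ(x,z))^{−1} − I, H_V(x,z) := V(x + σ(x,z)) − V(x) + Q(x,z)·V(x + σ(x,z)), and G_V(x,z) := H_V(x,z) + ∇_x σ(x,z)·V(x) − σ(x,z)·∇V(x). Then there is a constant C' depending only on C, C₁, K and d such that for all x,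 z: |H_V(x,z)| ≤ C' min(1,|z|) and |G_V(x,z)| ≤ C' min(1,|z|²). -/
/-!
For `a = ∇ₓσ` and `Q = (1 + a)⁻¹ - 1`, expanding `(Q + 1)(1 + a) = 1` gives `Q + a = -Q a`; as
`‖a‖ ≤ 1/2` this yields `‖Q‖ ≤ 2‖a‖` and `‖Q + a‖ ≤ 2‖a‖²`. Then `H_V` is a first-order increment of `V` plus `Q V`, while
`G_V` splits as the second-order Taylor remainder of `V` at `x` in direction `σ`, plus `(Q + a) V(x + σ)`,
plus `a (V x - V(x + σ))`: each piece is quadratic in `‖σ‖ + ‖∇ₓσ‖ ≤ (C + C₁) min(1, |z|)`.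
-/

open Set

section InverseOneAdd

variable {R : Type*} [NormedRing R] {a : R}

lemma inverse_one_add_sub_one_add_eq (h : IsUnit (1 + a)) :
    Ring.inverse (1 + a) - 1 + a = -((Ring.inverse (1 + a) - 1) * a) := by
  have hinv : Ring.inverse (1 + a) + Ring.inverse (1 + a) * a = 1 := by
    simpa only [mul_add, mul_one] using Ring.inverse_mul_cancel _ h
  rw [eq_neg_iff_add_eq_zero, sub_mul, one_mul]
  calc Ring.inverse (1 + a) - 1 + a + (Ring.inverse (1 + a) * a - a)
      = Ring.inverse (1 + a) + Ring.inverse (1 + a) * a - 1 := by abel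
    _ = 0 := by rw [hinv, sub_self]

variable [CompleteSpace R]

lemma isUnit_one_add_of_norm_lt_one (ha : ‖a‖ < 1) : IsUnit (1 + a) := by
  have := (Units.oneSub (-a) (by rwa [norm_neg])).isUnit
  rwa [Units.val_oneSub, sub_neg_eq_add] at this

lemma norm_inverse_one_add_sub_one_le (ha : ‖a‖ ≤ 1 / 2) :
    ‖Ring.inverse (1 + a) - 1‖ ≤ 2 * ‖a‖ := by
  have hQ := inverse_one_add_sub_one_add_eq (isUnit_one_add_of_norm_lt_one (by linarith))
  set Q := Ring.inverse (1 + a) - 1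
  have : ‖Q‖ ≤ ‖Q‖ * ‖a‖ + ‖a‖ := calc
    ‖Q‖ = ‖-(Q * a) - a‖ := by rw [← hQ, add_sub_cancel_right]
    _ ≤ ‖Q * a‖ + ‖a‖ := by rw [← norm_neg (Q * a)]; exact norm_sub_le _ _
    _ ≤ ‖Q‖ * ‖a‖ + ‖a‖ := by gcongr; exact norm_mul_le _ _
  nlinarith [norm_nonneg Q]

lemma norm_inverse_one_add_sub_one_add_le (ha : ‖a‖ ≤ 1 / 2) :
    ‖Ring.inverse (1 + a) - 1 + a‖ ≤ 2 * ‖a‖ ^ 2 := by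
  rw [inverse_one_add_sub_one_add_eq (isUnit_one_add_of_norm_lt_one (by linarith)), norm_neg]
  calc ‖(Ring.inverse (1 + a) - 1) * a‖ ≤ ‖Ring.inverse (1 + a) - 1‖ * ‖a‖ := norm_mul_le _ _
    _ ≤ 2 * ‖a‖ * ‖a‖ := by gcongr; exact norm_inverse_one_add_sub_one_le ha
    _ = 2 * ‖a‖ ^ 2 := by ring

end InverseOneAdd

section Taylor

variable {E F : Type*} [NormedAddCommGroup E] [NormedSpace ℝ E]
  [NormedAddCommGroup F] [NormedSpace ℝ F] {V : E → F} {K : ℝ}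

lemma norm_sub_le_of_forall_norm_fderiv_le (hV : Differentiable ℝ V)
    (hV1 : ∀ y, ‖fderiv ℝ V y‖ ≤ K) (x y : E) : ‖V x - V y‖ ≤ K * ‖x - y‖ :=
  convex_univ.norm_image_sub_le_of_norm_fderiv_le (fun z _ => hV z) (fun z _ => hV1 z)
    (mem_univ y) (mem_univ x)

lemma norm_sub_sub_fderiv_le_of_norm_iteratedFDeriv_two_le (hV : ContDiff ℝ 2 V)
    (hV2 : ∀ y, ‖iteratedFDeriv ℝ 2 V y‖ ≤ K) (x h : E) :
    ‖V (x + h) - V x - fderiv ℝ V x h‖ ≤ K * ‖h‖ ^ 2 := by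
  have hV' : Differentiable ℝ (fderiv ℝ V) :=
    (hV.fderiv_right (m := 1) (by norm_num)).differentiable (by norm_num)
  have hV'2 (y : E) : ‖fderiv ℝ (fderiv ℝ V) y‖ ≤ K := by
    rw [← norm_iteratedFDeriv_one, norm_iteratedFDeriv_fderiv]
    exact hV2 y
  have hK : 0 ≤ K := (norm_nonneg (fderiv ℝ (fderiv ℝ V) x)).trans (hV'2 x)
  have hlip (y : E) (hy : y ∈ Metric.closedBall x ‖h‖) : ‖fderiv ℝ V y - fderiv ℝ V x‖ ≤ K * ‖h‖ :=
    (norm_sub_le_of_forall_norm_fderiv_le hV' hV'2 y x).trans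
      (mul_le_mul_of_nonneg_left (by rwa [← dist_eq_norm, ← Metric.mem_closedBall]) hK)
  have := (convex_closedBall x ‖h‖).norm_image_sub_le_of_norm_fderiv_le'
    (fun y _ => hV.differentiable (by norm_num) y) hlip (Metric.mem_closedBall_self (norm_nonneg h))
    (show x + h ∈ Metric.closedBall x ‖h‖ by simp [dist_eq_norm])
  simpa only [add_sub_cancel_left, mul_assoc, ← sq] using this

end Taylor

section JumpTerms

variable {E R : Type*} [NormedAddCommGroup E] [NormedSpace ℝ E]
  [NormedRing R] [NormedAlgebra ℝ R]

/-- The paper's `H_V(x, z)`, with `h = σ(x, z)` and `a = ∇ₓσ(x, z)`. -/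
noncomputable def jumpH (V : E → R) (a : R) (x h : E) : R :=
  V (x + h) - V x + (Ring.inverse (1 + a) - 1) * V (x + h)

/-- The paper's `G_V(x, z)`, with `h = σ(x, z)` and `a = ∇ₓσ(x, z)`. -/
noncomputable def jumpG (V : E → R) (a : R) (x h : E) : R :=
  jumpH V a x h + a * V x - fderiv ℝ V x h

variable {V : E → R} {K : ℝ} {a : R}

lemma jumpG_eq (x h : E) :
    jumpG V a x h = (V (x + h) - V x - fderiv ℝ V x h) + (Ring.inverse (1 + a) - 1 + a) * V (x + h)
      + a * (V x - V (x + h)) := by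
  rw [jumpG, jumpH, add_mul, mul_sub]
  abel

variable [CompleteSpace R]

lemma norm_jumpH_le (hV : Differentiable ℝ V) (hV0 : ∀ y, ‖V y‖ ≤ K)
    (hV1 : ∀ y, ‖fderiv ℝ V y‖ ≤ K) (ha : ‖a‖ ≤ 1 / 2) (x h : E) :
    ‖jumpH V a x h‖ ≤ K * ‖h‖ + 2 * ‖a‖ * K := calc
  ‖jumpH V a x h‖ ≤ ‖V (x + h) - V x‖ + ‖Ring.inverse (1 + a) - 1‖ * ‖V (x + h)‖ :=
    (norm_add_le _ _).trans (by gcongr; exact norm_mul_le _ _)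
  _ ≤ K * ‖h‖ + 2 * ‖a‖ * K := by
    gcongr
    · simpa only [add_sub_cancel_left] using norm_sub_le_of_forall_norm_fderiv_le hV hV1 (x + h) x
    · exact norm_inverse_one_add_sub_one_le ha
    · exact hV0 _

lemma norm_jumpG_le (hV : ContDiff ℝ 2 V) (hV0 : ∀ y, ‖V y‖ ≤ K)
    (hV1 : ∀ y, ‖fderiv ℝ V y‖ ≤ K) (hV2 : ∀ y, ‖iteratedFDeriv ℝ 2 V y‖ ≤ K)
    (ha : ‖a‖ ≤ 1 / 2) (x h : E) :
    ‖jumpG V a x h‖ ≤ K * ‖h‖ ^ 2 + 2 * ‖a‖ ^ 2 * K + ‖a‖ * (K * ‖h‖) := by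
  have hVx : ‖V x - V (x + h)‖ ≤ K * ‖h‖ := by
    simpa only [sub_add_cancel_left, norm_neg] using
      norm_sub_le_of_forall_norm_fderiv_le (hV.differentiable (by norm_num)) hV1 x (x + h)
  rw [jumpG_eq]
  refine (norm_add₃_le).trans ?_
  gcongr
  · exact norm_sub_sub_fderiv_le_of_norm_iteratedFDeriv_two_le hV hV2 x h
  · exact (norm_mul_le _ _).trans
      (mul_le_mul (norm_inverse_one_add_sub_one_add_le ha) (hV0 _) (norm_nonneg _) (by positivity))
  · exact (norm_mul_le _ _).trans (by gcongr)

end JumpTerms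

lemma min_one_sq {t : ℝ} (ht : 0 ≤ t) : min 1 t ^ 2 = min 1 (t ^ 2) := by
  rcases le_total t 1 with h | h
  · rw [min_eq_right h, min_eq_right (pow_le_one₀ ht h)]
  · rw [min_eq_left h, min_eq_left (one_le_pow₀ h), one_pow]

theorem stmt_12_general {d : ℕ} (C K C₁ : ℝ) (hC : 0 < C) (hK : 0 < K)
    (hC₁ : C₁ ∈ Ioc (0:ℝ) (1 / 2))
    (σ : EuclideanSpace ℝ (Fin d) → EuclideanSpace ℝ (Fin d) → EuclideanSpace ℝ (Fin d))
    (hσbd : ∀ x z, ‖σ x z‖ ≤ C * min 1 ‖z‖)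
    (hσder : ∀ x z, ‖fderiv ℝ (fun y => σ y z) x‖ ≤ C₁ * min 1 ‖z‖)
    (V : EuclideanSpace ℝ (Fin d) →
      (EuclideanSpace ℝ (Fin d) →L[ℝ] EuclideanSpace ℝ (Fin d)))
    (hV : ContDiff ℝ 2 V)
    (hV0 : ∀ x, ‖V x‖ ≤ K)
    (hV1 : ∀ x, ‖iteratedFDeriv ℝ 1 V x‖ ≤ K)
    (hV2 : ∀ x, ‖iteratedFDeriv ℝ 2 V x‖ ≤ K) :
    ∃ C' > (0:ℝ), ∀ x z,
      ‖V (x + σ x z) - V x +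
          (Ring.inverse (1 + fderiv ℝ (fun y => σ y z) x) - 1) * V (x + σ x z)‖ ≤
        C' * min 1 ‖z‖ ∧
      ‖V (x + σ x z) - V x +
          (Ring.inverse (1 + fderiv ℝ (fun y => σ y z) x) - 1) * V (x + σ x z) +
          fderiv ℝ (fun y => σ y z) x * V x - fderiv ℝ V x (σ x z)‖ ≤
        C' * min 1 (‖z‖ ^ 2) := by
  obtain ⟨hC₁0, hC₁half⟩ := hC₁
  have hV1' (y) : ‖fderiv ℝ V y‖ ≤ K := by simpa only [norm_iteratedFDeriv_one] using hV1 y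
  refine ⟨K * (1 + C + 2 * C₁) ^ 2, by positivity, fun x z => ?_⟩
  set m := min 1 ‖z‖
  have hm : 0 ≤ m := le_min zero_le_one (norm_nonneg z)
  have hσ := hσbd x z
  have ha := hσder x z
  have ha_half : ‖fderiv ℝ (fun y => σ y z) x‖ ≤ 1 / 2 :=
    ha.trans (by nlinarith [min_le_left 1 ‖z‖])
  rw [← min_one_sq (norm_nonneg z)]
  constructor
  · calc _ ≤ K * ‖σ x z‖ + 2 * ‖fderiv ℝ (fun y => σ y z) x‖ * K :=
          norm_jumpH_le (hV.differentiable (by norm_num)) hV0 hV1' ha_half x (σ x z)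
      _ ≤ K * (C * m) + 2 * (C₁ * m) * K := by gcongr
      _ = K * (C + 2 * C₁) * m := by ring
      _ ≤ K * (1 + C + 2 * C₁) ^ 2 * m := by gcongr; nlinarith
  · calc _ ≤ K * ‖σ x z‖ ^ 2 + 2 * ‖fderiv ℝ (fun y => σ y z) x‖ ^ 2 * K
            + ‖fderiv ℝ (fun y => σ y z) x‖ * (K * ‖σ x z‖) :=
          norm_jumpG_le hV hV0 hV1' hV2 ha_half x (σ x z)
      _ ≤ K * (C * m) ^ 2 + 2 * (C₁ * m) ^ 2 * K + C₁ * m * (K * (C * m)) := by gcongr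
      _ = K * (C ^ 2 + 2 * C₁ ^ 2 + C₁ * C) * m ^ 2 := by ring
      _ ≤ K * (1 + C + 2 * C₁) ^ 2 * m ^ 2 := by gcongr; nlinarith

/-- With `|σ(x,z)| ≤ C min(1,|z|)`, `‖∇ₓσ(x,z)‖ ≤ C₁ min(1,|z|) ≤ 1/2`
(so that `I + ∇ₓσ` is invertible), `V : ℝ^d → ℝ^{d×d}` C² with `‖V‖,‖∇V‖,‖∇²V‖ ≤ K`,
and `Q := (I + ∇ₓσ)⁻¹ - I`, `H_V := V(x+σ) - V(x) + Q·V(x+σ)`,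
`G_V := H_V + ∇ₓσ·V(x) - σ·∇V(x)`, there is `C'` depending only on `C, C₁, K, d` with
`|H_V(x,z)| ≤ C' min(1,|z|)` and `|G_V(x,z)| ≤ C' min(1,|z|²)`. -/
theorem stmt_12 {d : ℕ} (C K C₁ : ℝ) (hC : 0 < C) (hK : 0 < K)
    (hC₁ : C₁ ∈ Ioc (0:ℝ) (1 / 2))
    (σ : EuclideanSpace ℝ (Fin d) → EuclideanSpace ℝ (Fin d) → EuclideanSpace ℝ (Fin d))
    (hσdiff : ∀ z, ContDiff ℝ 1 (fun x => σ x z))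
    (hσbd : ∀ x z, ‖σ x z‖ ≤ C * min 1 ‖z‖)
    (hσder : ∀ x z, ‖fderiv ℝ (fun y => σ y z) x‖ ≤ C₁ * min 1 ‖z‖)
    (V : EuclideanSpace ℝ (Fin d) →
      (EuclideanSpace ℝ (Fin d) →L[ℝ] EuclideanSpace ℝ (Fin d)))
    (hV : ContDiff ℝ 2 V)
    (hV0 : ∀ x, ‖V x‖ ≤ K)
    (hV1 : ∀ x, ‖iteratedFDeriv ℝ 1 V x‖ ≤ K)
    (hV2 : ∀ x, ‖iteratedFDeriv ℝ 2 V x‖ ≤ K) :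
    ∃ C' > (0:ℝ), ∀ x z,
      ‖V (x + σ x z) - V x +
          (Ring.inverse (1 + fderiv ℝ (fun y => σ y z) x) - 1) * V (x + σ x z)‖ ≤
        C' * min 1 ‖z‖ ∧
      ‖V (x + σ x z) - V x +
          (Ring.inverse (1 + fderiv ℝ (fun y => σ y z) x) - 1) * V (x + σ x z) +
          fderiv ℝ (fun y => σ y z) x * V x - fderiv ℝ V x (σ x z)‖ ≤
        C' * min 1 (‖z‖ ^ 2) :=
  stmt_12_general C K C₁ hC hK hC₁ σ hσbd hσder V hV hV0 hV1 hV2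
end

section
/- Let α ∈ (0,2), c₀, C₀ > 0, and let ν be a Borel measure on ℝ^d∖{0} such that for all ε ∈ (0,1): ∫_{|z|≤ε}|z|³ ν(dz) ≥ c₀ ε^{3−α} and ∫_{|z|≤ε}|z|⁴ ν(dz) ≤ C₀ ε^{4−α}. Let β > 0, q ≥ 1+β, c ∈ (0,1], λ ≥ 1, and let g : ℝ^d → [0,∞) be measurable with g(z) ≤ λ^β for all z and |g(z) − g(0)| ≤ λ^β |z| for all z. Then ∫_{|z| ≤ (cλ^{−q})^{1/3}} (1 − e^{−λ g(z) |z|³}) ν(dz) ≥ (c₀ c^{(3−α)/3}/e) · g(0) · λ^{1 − (3−α)q/3} − (C₀ c^{(4−α)/3}/e) · λ^{1 + β − (4−α)q/3}. -/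
/-!
On the ball `‖z‖ ≤ E`, `E = (c λ^{-q})^{1/3}`, the exponent `x = λ g(z) |z|³` is at most
`c λ^{1+β-q} ≤ 1`, so `1 - e^{-x} ≥ x / e`. The Lipschitz bound gives
`g(z) |z|³ ≥ g(0) |z|³ - λ^β |z|⁴`, and integrating over a smaller ball `‖z‖ ≤ ε` turns the two
moment hypotheses into the lower bound `(λ/e) (g(0) c₀ ε^{3-α} - λ^β C₀ ε^{4-α})`. The moment
hypotheses only hold for `ε < 1` while `E` may equal `1`, so the bound at `ε = E` is obtained
by letting `ε ↑ E`.
-/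

open MeasureTheory Set Filter Topology

lemma Real.div_exp_one_le_one_sub_exp_neg {x : ℝ} (h0 : 0 ≤ x) (h1 : x ≤ 1) :
    x / Real.exp 1 ≤ 1 - Real.exp (-x) := by
  -- convexity of `exp` on `[-1, 0]` gives `1 - exp (-x) ≥ x (1 - 1/e)`, and `e ≥ 2`
  have hconv := convexOn_exp.2 (mem_univ 0) (mem_univ (-1))
    (sub_nonneg.2 h1) h0 (sub_add_cancel 1 x)
  simp only [smul_eq_mul, mul_zero, mul_neg, mul_one, zero_add, Real.exp_zero] at hconv
  rw [Real.exp_neg 1] at hconv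
  have he : 2 ≤ Real.exp 1 := by linarith [Real.add_one_le_exp 1]
  have hinv : (Real.exp 1)⁻¹ ≤ 2⁻¹ := inv_anti₀ two_pos he
  rw [div_eq_mul_inv]
  nlinarith

lemma div_exp_one_mul_sub_le_one_sub_exp_neg {l b b₀ L r : ℝ} (hl : 0 ≤ l) (hb : 0 ≤ b)
    (hr : 0 ≤ r) (hx : l * b * r ^ 3 ≤ 1) (hlip : b₀ - b ≤ L * r) :
    l / Real.exp 1 * (b₀ * r ^ 3 - L * r ^ 4) ≤ 1 - Real.exp (-(l * b * r ^ 3)) := by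
  have hmoment : b₀ * r ^ 3 - L * r ^ 4 ≤ b * r ^ 3 := by
    nlinarith [mul_le_mul_of_nonneg_right hlip (pow_nonneg hr 3)]
  calc l / Real.exp 1 * (b₀ * r ^ 3 - L * r ^ 4)
      ≤ l / Real.exp 1 * (b * r ^ 3) := by gcongr
    _ = l * b * r ^ 3 / Real.exp 1 := by ring
    _ ≤ 1 - Real.exp (-(l * b * r ^ 3)) :=
      Real.div_exp_one_le_one_sub_exp_neg (by positivity) hx

lemma Real.rpow_rpow_one_div_three_mul_rpow_neg {c l : ℝ} (hc : 0 ≤ c) (hl : 0 ≤ l) (q s : ℝ) :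
    ((c * l ^ (-q)) ^ ((1 : ℝ) / 3)) ^ s = c ^ (s / 3) * l ^ (-(q * s / 3)) := by
  rw [← Real.rpow_mul (by positivity), Real.mul_rpow hc (by positivity), ← Real.rpow_mul hl]
  ring_nf

lemma Real.mul_rpow_mul_pow_three_le_one {β q c l : ℝ} (hc0 : 0 ≤ c) (hc1 : c ≤ 1)
    (hl : 1 ≤ l) (hq : 1 + β ≤ q) :
    l * l ^ β * ((c * l ^ (-q)) ^ ((1 : ℝ) / 3)) ^ 3 ≤ 1 := by
  have hl0 : 0 < l := one_pos.trans_le hl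
  rw [← Real.rpow_natCast, ← Real.rpow_mul (by positivity)]
  norm_num
  calc l * l ^ β * (c * l ^ (-q)) = c * l ^ (1 + β + -q) := by
        rw [Real.rpow_add hl0, Real.rpow_add hl0, Real.rpow_one]
        ring
    _ ≤ 1 * 1 := by
        gcongr
        exact Real.rpow_le_one_of_one_le_of_nonpos hl (by linarith)
    _ = 1 := one_mul 1

section MomentBound

variable {V : Type*} [NormedAddCommGroup V] [MeasurableSpace V] [OpensMeasurableSpace V]
  {ν : Measure V} {g : V → ℝ} {l L : ℝ}

lemma integrableOn_one_sub_exp_neg_mul_norm_pow_three {s : Set V}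
    (h3int : IntegrableOn (fun z => ‖z‖ ^ 3) s ν) (hl : 0 ≤ l) (hgmeas : Measurable g)
    (hg0 : ∀ z, 0 ≤ g z) (hgbd : ∀ z, g z ≤ L) :
    IntegrableOn (fun z => 1 - Real.exp (-(l * g z * ‖z‖ ^ 3))) s ν := by
  refine Integrable.mono' (h3int.const_mul (l * L)) (by fun_prop) (ae_of_all _ fun z => ?_)
  have hx : 0 ≤ l * g z * ‖z‖ ^ 3 := by have := hg0 z; positivity
  have hexp := Real.add_one_le_exp (-(l * g z * ‖z‖ ^ 3))
  rw [Real.norm_of_nonneg (by linarith [Real.exp_le_one_iff.2 (neg_nonpos.2 hx)])]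
  have : l * g z ≤ l * L := mul_le_mul_of_nonneg_left (hgbd z) hl
  nlinarith [pow_nonneg (norm_nonneg z) 3]

lemma div_exp_one_mul_moments_le_setIntegral_one_sub_exp_neg {ρ R : ℝ} (hρR : ρ ≤ R)
    (hl : 0 ≤ l) (hR : l * L * R ^ 3 ≤ 1) (hgmeas : Measurable g) (hg0 : ∀ z, 0 ≤ g z)
    (hgbd : ∀ z, g z ≤ L) (hglip : ∀ z, |g z - g 0| ≤ L * ‖z‖)
    (h3int : IntegrableOn (fun z => ‖z‖ ^ 3) {z | ‖z‖ ≤ R} ν)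
    (h4int : IntegrableOn (fun z => ‖z‖ ^ 4) {z | ‖z‖ ≤ ρ} ν) :
    l / Real.exp 1 * (g 0 * ∫ z in {z | ‖z‖ ≤ ρ}, ‖z‖ ^ 3 ∂ν
        - L * ∫ z in {z | ‖z‖ ≤ ρ}, ‖z‖ ^ 4 ∂ν) ≤
      ∫ z in {z | ‖z‖ ≤ R}, (1 - Real.exp (-(l * g z * ‖z‖ ^ 3))) ∂ν := by
  have hsub : {z : V | ‖z‖ ≤ ρ} ⊆ {z | ‖z‖ ≤ R} := fun z hz => hz.out.trans hρR
  have hfint := integrableOn_one_sub_exp_neg_mul_norm_pow_three h3int hl hgmeas hg0 hgbd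
  have hfnonneg : ∀ z, 0 ≤ 1 - Real.exp (-(l * g z * ‖z‖ ^ 3)) := fun z => by
    have := hg0 z
    simp only [sub_nonneg, Real.exp_le_one_iff, neg_nonpos]
    positivity
  have hpt : ∀ z ∈ {z : V | ‖z‖ ≤ ρ}, l / Real.exp 1 * (g 0 * ‖z‖ ^ 3 - L * ‖z‖ ^ 4) ≤
      1 - Real.exp (-(l * g z * ‖z‖ ^ 3)) := fun z hz => by
    refine div_exp_one_mul_sub_le_one_sub_exp_neg hl (hg0 z) (norm_nonneg z) ?_
      (by linarith [(abs_le.1 (hglip z)).1])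
    have hL : 0 ≤ L := (hg0 0).trans (hgbd 0)
    calc l * g z * ‖z‖ ^ 3 ≤ l * L * R ^ 3 := by
          gcongr
          · exact hgbd z
          · exact hz.out.trans hρR
      _ ≤ 1 := hR
  have hi3 : IntegrableOn (fun z => ‖z‖ ^ 3) {z | ‖z‖ ≤ ρ} ν := h3int.mono_set hsub
  have hlow : IntegrableOn (fun z => l / Real.exp 1 * (g 0 * ‖z‖ ^ 3 - L * ‖z‖ ^ 4))
      {z | ‖z‖ ≤ ρ} ν := ((hi3.const_mul (g 0)).sub (h4int.const_mul L)).const_mul _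
  calc l / Real.exp 1 * (g 0 * ∫ z in {z | ‖z‖ ≤ ρ}, ‖z‖ ^ 3 ∂ν
        - L * ∫ z in {z | ‖z‖ ≤ ρ}, ‖z‖ ^ 4 ∂ν)
      = ∫ z in {z | ‖z‖ ≤ ρ}, l / Real.exp 1 * (g 0 * ‖z‖ ^ 3 - L * ‖z‖ ^ 4) ∂ν := by
        rw [integral_const_mul, integral_sub (hi3.const_mul _) (h4int.const_mul _),
          integral_const_mul, integral_const_mul]
    _ ≤ ∫ z in {z | ‖z‖ ≤ ρ}, (1 - Real.exp (-(l * g z * ‖z‖ ^ 3))) ∂ν :=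
        setIntegral_mono_on hlow
          (hfint.mono_set hsub) (measurableSet_le measurable_norm measurable_const) hpt
    _ ≤ ∫ z in {z | ‖z‖ ≤ R}, (1 - Real.exp (-(l * g z * ‖z‖ ^ 3))) ∂ν :=
        setIntegral_mono_set hfint (ae_of_all _ hfnonneg) hsub.eventuallyLE

end MomentBound

theorem stmt_13_general {d : ℕ} (α c₀ C₀ : ℝ)
    (ν : Measure (EuclideanSpace ℝ (Fin d)))
    (h3int : IntegrableOn (fun z => ‖z‖ ^ 3) {z | ‖z‖ ≤ 1} ν)
    (h4int : IntegrableOn (fun z => ‖z‖ ^ 4) {z | ‖z‖ ≤ 1} ν)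
    (h3 : ∀ ε ∈ Ioo (0:ℝ) 1, c₀ * ε ^ (3 - α) ≤ ∫ z in {z | ‖z‖ ≤ ε}, ‖z‖ ^ 3 ∂ν)
    (h4 : ∀ ε ∈ Ioo (0:ℝ) 1, ∫ z in {z | ‖z‖ ≤ ε}, ‖z‖ ^ 4 ∂ν ≤ C₀ * ε ^ (4 - α))
    (β q c l : ℝ) (hβ : 0 < β) (hq : 1 + β ≤ q) (hc : c ∈ Ioc (0:ℝ) 1) (hl : 1 ≤ l)
    (g : EuclideanSpace ℝ (Fin d) → ℝ) (hgmeas : Measurable g) (hg0 : ∀ z, 0 ≤ g z)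
    (hgbd : ∀ z, g z ≤ l ^ β) (hglip : ∀ z, |g z - g 0| ≤ l ^ β * ‖z‖) :
    (c₀ * c ^ ((3 - α) / 3) / Real.exp 1) * g 0 * l ^ (1 - (3 - α) * q / 3) -
      (C₀ * c ^ ((4 - α) / 3) / Real.exp 1) * l ^ (1 + β - (4 - α) * q / 3) ≤
    ∫ z in {z | ‖z‖ ≤ (c * l ^ (-q)) ^ ((1:ℝ) / 3)},
      (1 - Real.exp (-(l * g z * ‖z‖ ^ 3))) ∂ν := by
  obtain ⟨hc0, hc1⟩ := hc
  have hl0 : 0 < l := one_pos.trans_le hl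
  set E := (c * l ^ (-q)) ^ ((1:ℝ) / 3)
  have hEpow : ∀ s, E ^ s = c ^ (s / 3) * l ^ (-(q * s / 3)) :=
    Real.rpow_rpow_one_div_three_mul_rpow_neg hc0.le hl0.le q
  have hE0 : 0 < E := by positivity
  have hE1 : E ≤ 1 := Real.rpow_le_one (by positivity)
    (mul_le_one₀ hc1 (by positivity) (Real.rpow_le_one_of_one_le_of_nonpos hl (by linarith)))
    (by norm_num)
  set Φ : ℝ → ℝ := fun ε => l / Real.exp 1 * (g 0 * (c₀ * ε ^ (3 - α)) - l ^ β * (C₀ * ε ^ (4 - α)))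
  have hΦ_le : ∀ ε ∈ Ioo 0 E,
      Φ ε ≤ ∫ z in {z | ‖z‖ ≤ E}, (1 - Real.exp (-(l * g z * ‖z‖ ^ 3))) ∂ν := fun ε hε => by
      have hε1 : ε ∈ Ioo (0:ℝ) 1 := ⟨hε.1, hε.2.trans_le hE1⟩
      refine le_trans ?_ (div_exp_one_mul_moments_le_setIntegral_one_sub_exp_neg hε.2.le
        hl0.le (Real.mul_rpow_mul_pow_three_le_one hc0.le hc1 hl hq) hgmeas hg0 hgbd hglip (h3int.mono_set fun z hz => hz.out.trans hE1)
        (h4int.mono_set fun z hz => hz.out.trans hε1.2.le))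
      gcongr l / Real.exp 1 * (g 0 * ?_ - l ^ β * ?_)
      · exact hg0 0
      · exact h3 ε hε1
      · exact h4 ε hε1
  have hΦcont : ContinuousAt Φ E := by fun_prop (disch := exact Or.inl hE0.ne')
  calc _ = Φ E := by
        simp only [Φ, hEpow]
        rw [show 1 - (3 - α) * q / 3 = 1 + -(q * (3 - α) / 3) by ring,
          show 1 + β - (4 - α) * q / 3 = 1 + β + -(q * (4 - α) / 3) by ring,
          Real.rpow_add hl0, Real.rpow_add hl0, Real.rpow_add hl0, Real.rpow_one]
        ring
    _ ≤ _ := le_of_tendsto (hΦcont.tendsto.mono_left nhdsWithin_le_nhds)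
        (eventually_mem_set.2 (Ioo_mem_nhdsLT hE0) |>.mono hΦ_le)

/-- Let `α ∈ (0,2)` and `ν` satisfy `∫_{|z|≤ε}|z|³ ν(dz) ≥ c₀ ε^(3-α)` and
`∫_{|z|≤ε}|z|⁴ ν(dz) ≤ C₀ ε^(4-α)` for `ε ∈ (0,1)`. If `β > 0`, `q ≥ 1+β`, `c ∈ (0,1]`,
`λ ≥ 1` and `g ≥ 0` satisfies `g(z) ≤ λ^β` and `|g(z) - g(0)| ≤ λ^β |z|`, then
`∫_{|z| ≤ (cλ^{-q})^{1/3}} (1 - e^{-λ g(z)|z|³}) ν(dz)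
  ≥ (c₀ c^{(3-α)/3}/e) g(0) λ^{1-(3-α)q/3} - (C₀ c^{(4-α)/3}/e) λ^{1+β-(4-α)q/3}`. -/
theorem stmt_13 {d : ℕ} (α c₀ C₀ : ℝ) (hα : α ∈ Ioo (0:ℝ) 2) (hc₀ : 0 < c₀) (hC₀ : 0 < C₀)
    (ν : Measure (EuclideanSpace ℝ (Fin d)))
    (hν0 : ν {0} = 0)
    (h3int : IntegrableOn (fun z => ‖z‖ ^ 3) {z | ‖z‖ ≤ 1} ν)
    (h4int : IntegrableOn (fun z => ‖z‖ ^ 4) {z | ‖z‖ ≤ 1} ν)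
    (h3 : ∀ ε ∈ Ioo (0:ℝ) 1, c₀ * ε ^ (3 - α) ≤ ∫ z in {z | ‖z‖ ≤ ε}, ‖z‖ ^ 3 ∂ν)
    (h4 : ∀ ε ∈ Ioo (0:ℝ) 1, ∫ z in {z | ‖z‖ ≤ ε}, ‖z‖ ^ 4 ∂ν ≤ C₀ * ε ^ (4 - α))
    (β q c l : ℝ) (hβ : 0 < β) (hq : 1 + β ≤ q) (hc : c ∈ Ioc (0:ℝ) 1) (hl : 1 ≤ l)
    (g : EuclideanSpace ℝ (Fin d) → ℝ) (hgmeas : Measurable g) (hg0 : ∀ z, 0 ≤ g z)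
    (hgbd : ∀ z, g z ≤ l ^ β) (hglip : ∀ z, |g z - g 0| ≤ l ^ β * ‖z‖) :
    (c₀ * c ^ ((3 - α) / 3) / Real.exp 1) * g 0 * l ^ (1 - (3 - α) * q / 3) -
      (C₀ * c ^ ((4 - α) / 3) / Real.exp 1) * l ^ (1 + β - (4 - α) * q / 3) ≤
    ∫ z in {z | ‖z‖ ≤ (c * l ^ (-q)) ^ ((1:ℝ) / 3)},
      (1 - Real.exp (-(l * g z * ‖z‖ ^ 3))) ∂ν :=
  stmt_13_general α c₀ C₀ ν h3int h4int h3 h4 β q c l hβ hq hc hl g hgmeas hg0 hgbd hglip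
end
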